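/- arXiv:1901.09153 — 11 statements merged into one kernel-verified Lean document; each statement's English description precedes it below -/
import Mathlib

section
/- Let A : ℂ^n → ℂ^n, Γ : ℂ^n → ℂ^m, and M : ℂ^m → ℂ^m be linear maps satisfying Γ ∘ A = M ∘ Γ. Then the kernel of Γ is an A-invariant subspace of ℂ^n, the range of Γ is an M-invariant subspace of ℂ^m, and the spectrum of A decomposes as σ(A) = σ(A|_{ker Γ}) ∪ σ(M|_{range Γ}), where T|_S denotes the restriction of a linear map T to a T-invariant subspace S and σ denotes the set of eigenvalues (by convention the spectrum of an endomorphism of the zero space is empty). -/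
/-- Spectral union formula (2.7) of Proposition 2.3(i): if `Γ ∘ A = M ∘ Γ`, then `ker Γ` is
`A`-invariant, `range Γ` is `M`-invariant, and the set of eigenvalues of `A` is the union of the
eigenvalues of the restriction of `A` to `ker Γ` and those of the restriction of `M` to
`range Γ`. -/
theorem spectrum_union_of_intertwining {n m : ℕ}
    (A : Module.End ℂ (Fin n → ℂ))
    (Γ : (Fin n → ℂ) →ₗ[ℂ] (Fin m → ℂ))
    (M : Module.End ℂ (Fin m → ℂ))
    (h : Γ ∘ₗ A = (M : (Fin m → ℂ) →ₗ[ℂ] (Fin m → ℂ)) ∘ₗ Γ) :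
    (∀ x ∈ LinearMap.ker Γ, A x ∈ LinearMap.ker Γ) ∧
    (∀ y ∈ LinearMap.range Γ, M y ∈ LinearMap.range Γ) ∧
    ∀ (hK : ∀ x ∈ LinearMap.ker Γ, A x ∈ LinearMap.ker Γ)
      (hR : ∀ y ∈ LinearMap.range Γ, M y ∈ LinearMap.range Γ),
      {μ : ℂ | Module.End.HasEigenvalue A μ} =
        {μ : ℂ | Module.End.HasEigenvalue
            (LinearMap.restrict (A : (Fin n → ℂ) →ₗ[ℂ] (Fin n → ℂ)) hK) μ} ∪
        {μ : ℂ | Module.End.HasEigenvalue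
            (LinearMap.restrict (M : (Fin m → ℂ) →ₗ[ℂ] (Fin m → ℂ)) hR) μ} := by
  have hcomm : ∀ x, Γ (A x) = M (Γ x) := fun x =>
    congrFun (congrArg DFunLike.coe h) x
  have hK0 : ∀ x ∈ LinearMap.ker Γ, A x ∈ LinearMap.ker Γ := by
    intro x hx
    rw [LinearMap.mem_ker] at hx ⊢
    rw [hcomm, hx, map_zero]
  have hR0 : ∀ y ∈ LinearMap.range Γ, M y ∈ LinearMap.range Γ := by
    rintro y ⟨x, rfl⟩
    exact ⟨A x, hcomm x⟩
  refine ⟨hK0, hR0, ?_⟩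
  intro hK hR
  ext μ
  simp only [Set.mem_union, Set.mem_setOf_eq]
  constructor
  · intro hμ
    obtain ⟨x, hx⟩ := hμ.exists_hasEigenvector
    have hAx : A x = μ • x := Module.End.mem_eigenspace_iff.mp hx.1
    by_cases hker : Γ x = 0
    · left
      refine Module.End.hasEigenvalue_of_hasEigenvector (x := ⟨x, hker⟩) ⟨?_, ?_⟩
      · rw [Module.End.mem_eigenspace_iff]
        exact Subtype.ext (by simpa using hAx)
      · exact fun h0 => hx.2 (by simpa using congrArg Subtype.val h0)
    · right
      refine Module.End.hasEigenvalue_of_hasEigenvector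
        (x := ⟨Γ x, LinearMap.mem_range_self Γ x⟩) ⟨?_, ?_⟩
      · rw [Module.End.mem_eigenspace_iff]
        refine Subtype.ext ?_
        have : M (Γ x) = μ • Γ x := by rw [← hcomm, hAx, map_smul]
        simpa using this
      · exact fun h0 => hker (by simpa using congrArg Subtype.val h0)
  · rintro (hμ | hμ)
    · obtain ⟨⟨x, hxk⟩, hx⟩ := hμ.exists_hasEigenvector
      have hAx := Module.End.mem_eigenspace_iff.mp hx.1
      refine Module.End.hasEigenvalue_of_hasEigenvector (x := x) ⟨?_, ?_⟩
      · rw [Module.End.mem_eigenspace_iff]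
        simpa using congrArg Subtype.val hAx
      · exact fun h0 => hx.2 (Subtype.ext h0)
    · by_contra hA
      have hzero : ∀ x : Fin n → ℂ, A x = μ • x → x = 0 := by
        intro x hx
        by_contra h0
        exact hA (Module.End.hasEigenvalue_of_hasEigenvector
          ⟨Module.End.mem_eigenspace_iff.mpr hx, h0⟩)
      set B : (Fin n → ℂ) →ₗ[ℂ] (Fin n → ℂ) :=
        (A : (Fin n → ℂ) →ₗ[ℂ] (Fin n → ℂ)) - μ • LinearMap.id with hB
      have hBapp : ∀ x, B x = A x - μ • x := fun x => rfl
      have hBinj : Function.Injective B := by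
        rw [← LinearMap.ker_eq_bot]
        rw [LinearMap.ker_eq_bot']
        intro x hx
        rw [hBapp, sub_eq_zero] at hx
        exact hzero x hx
      have hBK : ∀ x ∈ LinearMap.ker Γ, B x ∈ LinearMap.ker Γ := by
        intro x hx
        rw [hBapp]
        exact Submodule.sub_mem _ (hK x hx) (Submodule.smul_mem _ _ hx)
      have hBkinj : Function.Injective (B.restrict hBK) := by
        intro a b hab
        exact Subtype.ext (hBinj (by
          have := congrArg Subtype.val hab
          simpa using this))
      have hBksurj : Function.Surjective (B.restrict hBK) :=
        LinearMap.injective_iff_surjective.mp hBkinj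
      obtain ⟨⟨y, hyr⟩, hy⟩ := hμ.exists_hasEigenvector
      have hMy : M y = μ • y := by
        simpa using congrArg Subtype.val (Module.End.mem_eigenspace_iff.mp hy.1)
      have hy0 : y ≠ 0 := fun h0 => hy.2 (Subtype.ext h0)
      obtain ⟨x, rfl⟩ := hyr
      have hBx : B x ∈ LinearMap.ker Γ := by
        rw [LinearMap.mem_ker, hBapp, map_sub, map_smul, hcomm, hMy, sub_self]
      obtain ⟨z, hz⟩ := hBksurj ⟨B x, hBx⟩
      have hzx : (z : Fin n → ℂ) = x := by
        apply hBinj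
        have := congrArg Subtype.val hz
        simpa using this
      exact hy0 (by rw [← hzx]; exact LinearMap.mem_ker.mp z.2)
end

section
/- Let A : ℂ^n → ℂ^n, Γ : ℂ^n → ℂ^m, and M : ℂ^m → ℂ^m be linear maps satisfying Γ ∘ A = M ∘ Γ, and suppose every eigenvalue of M is real. Then every eigenvalue of A is real if and only if every eigenvalue of the restriction of A to the A-invariant subspace ker Γ is real. (In the paper's terminology: the system is weakly hyperbolic with the constraint Γ if and only if it is weakly hyperbolic without the constraint.) -/
/-- First assertion of Proposition 2.3(i): if `Γ ∘ A = M ∘ Γ` and every eigenvalue of `M`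
is real, then every eigenvalue of `A` is real if and only if every eigenvalue of the
restriction of `A` to the `A`-invariant subspace `ker Γ` is real (weak hyperbolicity with
the constraint iff weak hyperbolicity without the constraint). -/
theorem weakly_hyperbolic_with_constraint_iff_without {n m : ℕ}
    (A : Module.End ℂ (Fin n → ℂ))
    (Γ : (Fin n → ℂ) →ₗ[ℂ] (Fin m → ℂ))
    (M : Module.End ℂ (Fin m → ℂ))
    (h : Γ ∘ₗ A = (M : (Fin m → ℂ) →ₗ[ℂ] (Fin m → ℂ)) ∘ₗ Γ)
    (hM : ∀ μ : ℂ, Module.End.HasEigenvalue M μ → μ.im = 0)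
    (hK : ∀ x ∈ LinearMap.ker Γ, A x ∈ LinearMap.ker Γ) :
    (∀ μ : ℂ, Module.End.HasEigenvalue A μ → μ.im = 0) ↔
    (∀ μ : ℂ, Module.End.HasEigenvalue
        (LinearMap.restrict (A : (Fin n → ℂ) →ₗ[ℂ] (Fin n → ℂ)) hK) μ → μ.im = 0) := by
  constructor
  · intro hA μ hμ
    obtain ⟨v, hv⟩ := hμ.exists_hasEigenvector
    apply hA μ
    apply Module.End.hasEigenvalue_of_hasEigenvector (x := (v : Fin n → ℂ))
    constructor
    · rw [Module.End.mem_eigenspace_iff]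
      have := hv.apply_eq_smul
      have h2 := congrArg Subtype.val this
      simpa [LinearMap.restrict_apply] using h2
    · intro h0
      exact hv.right (Subtype.ext h0)
  · intro hR μ hμ
    obtain ⟨v, hv⟩ := hμ.exists_hasEigenvector
    have hAv : A v = μ • v := hv.apply_eq_smul
    by_cases hΓ : v ∈ LinearMap.ker Γ
    · apply hR μ
      apply Module.End.hasEigenvalue_of_hasEigenvector
        (x := (⟨v, hΓ⟩ : LinearMap.ker Γ))
      constructor
      · rw [Module.End.mem_eigenspace_iff]
        apply Subtype.ext
        simpa [LinearMap.restrict_apply] using hAv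
      · intro h0
        exact hv.right (congrArg Subtype.val h0)
    · apply hM μ
      apply Module.End.hasEigenvalue_of_hasEigenvector (x := Γ v)
      constructor
      · rw [Module.End.mem_eigenspace_iff]
        have := congrFun (congrArg DFunLike.coe h) v
        simp only [LinearMap.comp_apply] at this
        rw [← this, hAv, map_smul]
      · simpa [LinearMap.mem_ker] using hΓ
end

section
/- Let A : ℂ^n → ℂ^n, Γ : ℂ^n → ℂ^m, and M : ℂ^m → ℂ^m be linear maps satisfying Γ ∘ A = M ∘ Γ. Suppose the restriction A|_{ker Γ} is diagonalizable, the restriction M|_{range Γ} is diagonalizable, and the spectra σ(A|_{ker Γ}) and σ(M|_{range Γ}) are disjoint. Then A is diagonalizable; moreover if in addition all eigenvalues of A|_{ker Γ} and of M|_{range Γ} are real, then all eigenvalues of A are real and semisimple. -/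
open Polynomial

lemma aeval_restrict_apply' {K V : Type*} [Field K] [AddCommGroup V] [Module K V]
    (f : Module.End K V) {q : Submodule K V} (hq : ∀ x ∈ q, f x ∈ q) (p : K[X])
    (x : q) :
    ((Polynomial.aeval (LinearMap.restrict (f : V →ₗ[K] V) hq) p) x : V) =
      Polynomial.aeval f p (x : V) := by
  induction p using Polynomial.induction_on' with
  | add r s hr hs => simp [hr, hs]
  | monomial n a =>
    simp only [Polynomial.aeval_monomial, Module.End.mul_apply, Module.algebraMap_end_apply,
      SetLike.val_smul]
    congr 1
    rw [Module.End.pow_restrict]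
    simp [LinearMap.restrict_apply]

lemma aeval_intertwine' {K V W : Type*} [Field K] [AddCommGroup V] [Module K V]
    [AddCommGroup W] [Module K W]
    (A : Module.End K V) (M : Module.End K W) (Γ : V →ₗ[K] W)
    (h : Γ ∘ₗ A = (M : W →ₗ[K] W) ∘ₗ Γ) (p : K[X]) (x : V) :
    Γ (Polynomial.aeval A p x) = Polynomial.aeval M p (Γ x) := by
  have hpow : ∀ (n : ℕ) (x : V), Γ ((A ^ n) x) = (M ^ n) (Γ x) := by
    intro n
    induction n with
    | zero => simp
    | succ k ih =>
      intro x
      rw [pow_succ', pow_succ']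
      simp only [Module.End.mul_apply]
      rw [show Γ (A ((A ^ k) x)) = M (Γ ((A ^ k) x)) from LinearMap.congr_fun h _, ih x]
  induction p using Polynomial.induction_on' with
  | add r s hr hs => simp [hr, hs]
  | monomial n a =>
    simp [Polynomial.aeval_monomial, Module.End.mul_apply, Module.algebraMap_end_apply, hpow]

lemma aeval_prod_eq_zero' {K V : Type*} [Field K] [AddCommGroup V] [Module K V]
    (f : Module.End K V) (s : Finset K)
    (hs : ∀ μ : K, Module.End.HasEigenvalue f μ → μ ∈ s)
    (htop : (⨆ μ : K, Module.End.eigenspace f μ) = ⊤) :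
    Polynomial.aeval f (∏ μ ∈ s, (Polynomial.X - Polynomial.C μ)) = 0 := by
  classical
  have key : (⊤ : Submodule K V) ≤ LinearMap.ker
      (Polynomial.aeval f (∏ μ ∈ s, (Polynomial.X - Polynomial.C μ))) := by
    rw [← htop]
    refine iSup_le fun μ => fun x hx => ?_
    rcases eq_or_ne x 0 with rfl | hx0
    · simp
    have hμ : μ ∈ s := hs μ (Module.End.hasEigenvalue_of_hasEigenvector ⟨hx, hx0⟩)
    show Polynomial.aeval f (∏ μ ∈ s, (Polynomial.X - Polynomial.C μ)) x = 0
    rw [← Finset.prod_erase_mul s (fun ν => Polynomial.X - Polynomial.C ν) hμ, map_mul,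
      Module.End.mul_apply]
    have : Polynomial.aeval f (Polynomial.X - Polynomial.C μ) x = 0 := by
      simp [Module.End.mem_eigenspace_iff.mp hx, Module.algebraMap_end_apply]
    rw [this, map_zero]
  ext x
  exact key (Submodule.mem_top) 

/-- Second assertion of Proposition 2.3(ii): suppose `Γ ∘ A = M ∘ Γ`, the restriction
`A|_{ker Γ}` is diagonalizable, the restriction `M|_{range Γ}` is diagonalizable, and their
spectra are disjoint.  Then `A` is diagonalizable; moreover, if in addition all eigenvalues of
`A|_{ker Γ}` and of `M|_{range Γ}` are real, then all eigenvalues of `A` are real and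
semisimple (each maximal generalized eigenspace coincides with the eigenspace). -/
theorem diagonalizable_of_intertwining_of_disjoint_spectra {n m : ℕ}
    (A : Module.End ℂ (Fin n → ℂ))
    (Γ : (Fin n → ℂ) →ₗ[ℂ] (Fin m → ℂ))
    (M : Module.End ℂ (Fin m → ℂ))
    (h : Γ ∘ₗ A = (M : (Fin m → ℂ) →ₗ[ℂ] (Fin m → ℂ)) ∘ₗ Γ)
    (hK : ∀ x ∈ LinearMap.ker Γ, A x ∈ LinearMap.ker Γ)
    (hR : ∀ y ∈ LinearMap.range Γ, M y ∈ LinearMap.range Γ)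
    (hAdiag : (⨆ μ : ℂ, Module.End.eigenspace
        (LinearMap.restrict (A : (Fin n → ℂ) →ₗ[ℂ] (Fin n → ℂ)) hK) μ) = ⊤)
    (hMdiag : (⨆ μ : ℂ, Module.End.eigenspace
        (LinearMap.restrict (M : (Fin m → ℂ) →ₗ[ℂ] (Fin m → ℂ)) hR) μ) = ⊤)
    (hdisj : Disjoint
        {μ : ℂ | Module.End.HasEigenvalue
            (LinearMap.restrict (A : (Fin n → ℂ) →ₗ[ℂ] (Fin n → ℂ)) hK) μ}
        {μ : ℂ | Module.End.HasEigenvalue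
            (LinearMap.restrict (M : (Fin m → ℂ) →ₗ[ℂ] (Fin m → ℂ)) hR) μ}) :
    ((⨆ μ : ℂ, Module.End.eigenspace A μ) = ⊤) ∧
    ((∀ μ : ℂ, Module.End.HasEigenvalue
          (LinearMap.restrict (A : (Fin n → ℂ) →ₗ[ℂ] (Fin n → ℂ)) hK) μ → μ.im = 0) →
     (∀ μ : ℂ, Module.End.HasEigenvalue
          (LinearMap.restrict (M : (Fin m → ℂ) →ₗ[ℂ] (Fin m → ℂ)) hR) μ → μ.im = 0) →
     (∀ μ : ℂ, Module.End.HasEigenvalue A μ → μ.im = 0) ∧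
     (∀ μ : ℂ, Module.End.maxGenEigenspace A μ = Module.End.eigenspace A μ)) := by
  classical
  set fA := LinearMap.restrict (A : (Fin n → ℂ) →ₗ[ℂ] (Fin n → ℂ)) hK with hfA_def
  set fM := LinearMap.restrict (M : (Fin m → ℂ) →ₗ[ℂ] (Fin m → ℂ)) hR with hfM_def
  have hfinA : Set.Finite {μ : ℂ | Module.End.HasEigenvalue fA μ} :=
    Module.End.finite_hasEigenvalue fA
  have hfinM : Set.Finite {μ : ℂ | Module.End.HasEigenvalue fM μ} :=
    Module.End.finite_hasEigenvalue fM
  set sA := hfinA.toFinset with hsA_def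
  set sB := hfinM.toFinset with hsB_def
  have memA : ∀ μ : ℂ, μ ∈ sA ↔ Module.End.HasEigenvalue fA μ := fun μ =>
    Set.Finite.mem_toFinset hfinA
  have memB : ∀ μ : ℂ, μ ∈ sB ↔ Module.End.HasEigenvalue fM μ := fun μ =>
    Set.Finite.mem_toFinset hfinM
  set P := ∏ μ ∈ sA, (Polynomial.X - Polynomial.C μ) with hP_def
  set Q := ∏ μ ∈ sB, (Polynomial.X - Polynomial.C μ) with hQ_def
  have hPA : Polynomial.aeval fA P = 0 :=
    aeval_prod_eq_zero' fA sA (fun μ hμ => (memA μ).mpr hμ) hAdiag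
  have hQM : Polynomial.aeval fM Q = 0 :=
    aeval_prod_eq_zero' fM sB (fun μ hμ => (memB μ).mpr hμ) hMdiag
  have hQx : ∀ x : Fin n → ℂ, Polynomial.aeval A Q x ∈ LinearMap.ker Γ := by
    intro x
    rw [LinearMap.mem_ker, aeval_intertwine' A M Γ h Q x]
    have hy : Γ x ∈ LinearMap.range Γ := ⟨x, rfl⟩
    have key := aeval_restrict_apply' M hR Q ⟨Γ x, hy⟩
    rw [← key, hQM]
    simp
  have hPQ : Polynomial.aeval A (P * Q) = 0 := by
    apply LinearMap.ext
    intro x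
    rw [map_mul, Module.End.mul_apply]
    have hy := hQx x
    have key := aeval_restrict_apply' A hK P ⟨Polynomial.aeval A Q x, hy⟩
    rw [← key, hPA]
    simp
  have hdisjF : Disjoint sA sB := by
    rw [Finset.disjoint_left]
    intro μ h1 h2
    exact Set.disjoint_left.mp hdisj ((memA μ).mp h1) ((memB μ).mp h2)
  have hunion : P * Q = ∏ μ ∈ sA ∪ sB, (Polynomial.X - Polynomial.C μ) :=
    (Finset.prod_union hdisjF).symm
  have hsq : Squarefree (P * Q) := by
    rw [hunion]
    exact (Polynomial.separable_prod_X_sub_C_iff'.mpr fun i _ j _ hij => hij).squarefree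
  have hss : A.IsSemisimple :=
    Module.End.isSemisimple_of_squarefree_aeval_eq_zero hsq hPQ
  have eig_eq : ∀ μ : ℂ, Module.End.maxGenEigenspace A μ = Module.End.eigenspace A μ :=
    fun μ => hss.isFinitelySemisimple.maxGenEigenspace_eq_eigenspace μ
  constructor
  · simp_rw [← eig_eq]
    exact Module.End.iSup_maxGenEigenspace_eq_top A
  · intro hAreal hMreal
    refine ⟨?_, eig_eq⟩
    intro μ hμ
    obtain ⟨x, hx⟩ := hμ.exists_hasEigenvector
    have h0 : (P * Q).eval μ • x = 0 := by
      rw [← Module.End.aeval_apply_of_hasEigenvector hx, hPQ]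
      simp
    have heval : (P * Q).eval μ = 0 :=
      (smul_eq_zero.mp h0).resolve_right hx.right
    rw [hunion, Polynomial.eval_prod] at heval
    obtain ⟨ν, hν, hν0⟩ := Finset.prod_eq_zero_iff.mp heval
    have hμν : μ = ν := by simpa [sub_eq_zero] using hν0
    subst hμν
    rcases Finset.mem_union.mp hν with h1 | h1
    · exact hAreal μ ((memA μ).mp h1)
    · exact hMreal μ ((memB μ).mp h1)
end

section
/- Let A : ℂ^n → ℂ^n, Γ : ℂ^n → ℂ^m, and M : ℂ^m → ℂ^m be linear maps satisfying Γ ∘ A = M ∘ Γ. Assume M is diagonalizable and the restriction A|_{ker Γ} is diagonalizable. Then every generalized eigenvector of A has height at most 2: for every μ ∈ ℂ, every r ∈ ℂ^n, and every i ≥ 1, if (A − μ·Id)^i r = 0 then (A − μ·Id)² r = 0. -/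
open Module.End in
/-- If the eigenspaces of `f` span, then every generalized eigenvector is an eigenvector. -/
lemma diag_height_one {V : Type*} [AddCommGroup V] [Module ℂ V]
    (f : Module.End ℂ V) (hdiag : (⨆ μ : ℂ, Module.End.eigenspace f μ) = ⊤)
    (μ : ℂ) (x : V) (k : ℕ) (hx : ((f - μ • 1) ^ k) x = 0) :
    (f - μ • (1 : Module.End ℂ V)) x = 0 := by
  have hxg : x ∈ f.genEigenspace μ ⊤ :=
    mem_genEigenspace_top.mpr ⟨k, LinearMap.mem_ker.mpr hx⟩
  have hsplit : (⊤ : Submodule ℂ V) ≤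
      Module.End.eigenspace f μ ⊔ ⨆ ν ≠ μ, Module.End.eigenspace f ν := by
    rw [← hdiag]
    refine iSup_le fun ν ↦ ?_
    rcases eq_or_ne ν μ with rfl | hν
    · exact le_sup_left
    · exact le_trans (le_iSup₂ (f := fun ν _ ↦ Module.End.eigenspace f ν) ν hν) le_sup_right
  obtain ⟨y, hy, z, hz, hyz⟩ := Submodule.mem_sup.mp (hsplit (Submodule.mem_top (x := x)))
  have hz1 : z ∈ f.genEigenspace μ ⊤ := by
    have hyg : y ∈ f.genEigenspace μ ⊤ :=
      (f.genEigenspace μ).monotone le_top hy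
    have hzxy : z = x - y := by rw [eq_sub_iff_add_eq, add_comm]; exact hyz
    rw [hzxy]; exact Submodule.sub_mem _ hxg hyg
  have hz2 : z ∈ ⨆ ν ≠ μ, f.genEigenspace ν ⊤ := by
    have hle : (⨆ ν ≠ μ, Module.End.eigenspace f ν) ≤ ⨆ ν ≠ μ, f.genEigenspace ν ⊤ :=
      iSup₂_mono fun ν _ ↦ (f.genEigenspace ν).monotone le_top
    exact hle hz
  have hzero : z = 0 := by
    have := f.independent_genEigenspace (⊤ : ℕ∞) μ
    exact (Submodule.disjoint_def.mp this) z hz1 hz2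
  have hxy : x = y := by rw [← hyz, hzero, add_zero]
  have : f x = μ • x := by
    rw [hxy]; exact Module.End.mem_eigenspace_iff.mp hy
  simp [LinearMap.sub_apply, this]


/-- Remark 2.4: if `Γ ∘ A = M ∘ Γ`, `M` is diagonalizable, and the restriction of `A` to the
`A`-invariant subspace `ker Γ` is diagonalizable, then every generalized eigenvector of `A`
has height at most `2`: for every `μ`, `r` and `i ≥ 1`, `(A - μ·Id)^i r = 0` implies
`(A - μ·Id)² r = 0`. -/
theorem generalized_eigenvector_height_le_two {n m : ℕ}
    (A : Module.End ℂ (Fin n → ℂ))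
    (Γ : (Fin n → ℂ) →ₗ[ℂ] (Fin m → ℂ))
    (M : Module.End ℂ (Fin m → ℂ))
    (h : Γ ∘ₗ (A : (Fin n → ℂ) →ₗ[ℂ] (Fin n → ℂ))
          = (M : (Fin m → ℂ) →ₗ[ℂ] (Fin m → ℂ)) ∘ₗ Γ)
    (hK : ∀ x ∈ LinearMap.ker Γ, A x ∈ LinearMap.ker Γ)
    (hMdiag : (⨆ μ : ℂ, Module.End.eigenspace M μ) = ⊤)
    (hAdiag : (⨆ μ : ℂ, Module.End.eigenspace
        (LinearMap.restrict (A : (Fin n → ℂ) →ₗ[ℂ] (Fin n → ℂ)) hK) μ) = ⊤) :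
    ∀ (μ : ℂ) (r : Fin n → ℂ) (i : ℕ), 1 ≤ i →
      ((A - μ • (1 : Module.End ℂ (Fin n → ℂ))) ^ i) r = 0 →
      ((A - μ • (1 : Module.End ℂ (Fin n → ℂ))) ^ 2) r = 0 := by
  intro μ r i hi hir
  set N : Module.End ℂ (Fin n → ℂ) := A - μ • 1 with hN
  -- Step 1: Γ ∘ N^j = (M - μ•1)^j ∘ Γ
  have hcomm : ∀ x, Γ (N x) = (M - μ • (1 : Module.End ℂ (Fin m → ℂ))) (Γ x) := by
    intro x
    have := LinearMap.congr_fun h x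
    simp only [LinearMap.comp_apply] at this
    simp [hN, LinearMap.sub_apply, this]
  have hcommpow : ∀ (j : ℕ) (x : Fin n → ℂ),
      Γ ((N ^ j) x) = ((M - μ • (1 : Module.End ℂ (Fin m → ℂ))) ^ j) (Γ x) := by
    intro j
    induction j with
    | zero => intro x; simp
    | succ j ih =>
      intro x
      rw [pow_succ', pow_succ']
      simp only [Module.End.mul_apply]
      rw [hcomm, ih]
  -- so (M - μ)^i (Γ r) = 0, hence (M - μ)(Γ r) = 0 by diagonalizability of M
  have hMr : (M - μ • (1 : Module.End ℂ (Fin m → ℂ))) (Γ r) = 0 := by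
    apply diag_height_one M hMdiag μ (Γ r) i
    rw [← hcommpow i r, hir, map_zero]
  -- hence N r ∈ ker Γ
  have hNrker : N r ∈ LinearMap.ker Γ := by
    rw [LinearMap.mem_ker, hcomm r, hMr]
  -- Step 2: the restriction B of A to ker Γ
  set B := LinearMap.restrict (A : (Fin n → ℂ) →ₗ[ℂ] (Fin n → ℂ)) hK with hB
  have hBcoe : ∀ (j : ℕ) (x : LinearMap.ker Γ),
      ((((B - μ • (1 : Module.End ℂ (LinearMap.ker Γ))) ^ j) x : Fin n → ℂ))
        = (N ^ j) (x : Fin n → ℂ) := by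
    intro j
    induction j with
    | zero => intro x; simp
    | succ j ih =>
      intro x
      rw [pow_succ', pow_succ']
      simp only [Module.End.mul_apply]
      set y := ((B - μ • (1 : Module.End ℂ (LinearMap.ker Γ))) ^ j) x with hy
      have h1 : (((B - μ • (1 : Module.End ℂ (LinearMap.ker Γ))) y : Fin n → ℂ))
          = N (y : Fin n → ℂ) := by
        simp only [LinearMap.sub_apply, LinearMap.smul_apply, Module.End.one_apply,
          Submodule.coe_sub, Submodule.coe_smul, hN]
        congr 1
      rw [h1, ih x]
  set w : LinearMap.ker Γ := ⟨N r, hNrker⟩ with hw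
  have hwpow : ((B - μ • (1 : Module.End ℂ (LinearMap.ker Γ))) ^ (i - 1)) w = 0 := by
    apply Subtype.ext
    rw [hBcoe (i - 1) w]
    show (N ^ (i - 1)) (N r) = 0
    have : (N ^ (i - 1)) (N r) = (N ^ (i - 1) * N) r := rfl
    rw [this, ← pow_succ, Nat.sub_add_cancel hi, hir]
  have hfin : (B - μ • (1 : Module.End ℂ (LinearMap.ker Γ))) w = 0 :=
    diag_height_one B hAdiag μ w (i - 1) hwpow
  have : N (N r) = 0 := by
    have := congrArg (Subtype.val) hfin
    rwa [← pow_one (B - μ • (1 : Module.End ℂ (LinearMap.ker Γ))), hBcoe 1 w, pow_one] at this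
  rw [pow_two]
  exact this
end

section
/- Fix d, n, m and constant matrices N_j ∈ ℝ^{n×n}, Γ_j ∈ ℝ^{m×n}, M_j ∈ ℝ^{m×m} for j = 1,…,d, and twice continuously differentiable maps Q_j : ℝⁿ → ℝⁿ with Q_j(0) = 0 and DQ_j(0) = 0; set F_j(v) = N_j v + Q_j(v). Then the following are equivalent: (1) for every twice continuously differentiable map V : ℝ^d → ℝⁿ and every x ∈ ℝ^d, Σ_{j,k=1}^d Γ_j ∂_{x_j}∂_{x_k}(F_k ∘ V)(x) = Σ_{j,k=1}^d M_j Γ_k ∂_{x_j}∂_{x_k} V(x) (the involution identity Γ 𝓕(V) = 𝓜 Γ V, where Γ = Σ_j Γ_j ∂_{x_j}, 𝓜 = Σ_j M_j ∂_{x_j}, 𝓕(V) = Σ_j ∂_{x_j} F_j(V)); (2) the algebraic relations hold: Γ_j N_j = M_j Γ_j and Γ_j Q_j ≡ 0 (as a function on ℝⁿ) for every j, and Γ_j N_k + Γ_k N_j = M_j Γ_k + M_k Γ_j and Γ_j Q_k + Γ_k Q_j ≡ 0 for every pair j ≠ k. -/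
/-- Directional (partial) derivative `∂_{x_j} f` of a map `f : ℝ^d → ℝ^n`. -/
noncomputable def pd {d n : ℕ} (j : Fin d) (f : (Fin d → ℝ) → (Fin n → ℝ)) :
    (Fin d → ℝ) → (Fin n → ℝ) :=
  fun x => fderiv ℝ f x (Pi.single j 1)

/-!
Put `G_{jk}(u) = Γ_j F_k(u) - M_j Γ_k u`; the involution identity says
`Σ_{j,k} ∂_j ∂_k (G_{jk} ∘ V) = 0` for every `C²` map `V`. By the symmetry of second derivatives
this holds as soon as each `G_{jk} + G_{kj}` is constant. Conversely, the test map
`V(x) = v + x_a x_b w` has vanishing first derivatives at `0`, so there the identity reduces to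
`D(G_{ab} + G_{ba})(v) w = 0`. As `G_{jk}(0) = 0`, the condition is `G_{jk} + G_{kj} ≡ 0`, a
linear map plus a map with vanishing derivative at `0`; both parts must vanish separately, which
gives the algebraic relations (doubled on the diagonal `j = k`).
-/

open Matrix

theorem sum_sum_eq_zero_of_add_swap_eq_zero {ι M : Type*} [AddCommGroup M] [IsAddTorsionFree M]
    (s : Finset ι) (T : ι → ι → M) (hT : ∀ i j, T i j + T j i = 0) :
    ∑ i ∈ s, ∑ j ∈ s, T i j = 0 := by
  rw [← two_nsmul_eq_zero, two_nsmul]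
  nth_rewrite 2 [Finset.sum_comm]
  simp [← Finset.sum_add_distrib, hT]

theorem forall_forall_iff_forall_and_forall_ne {ι : Type*} (p : ι → ι → Prop) :
    (∀ i j, p i j) ↔ (∀ i, p i i) ∧ ∀ i j, i ≠ j → p i j :=
  ⟨fun h => ⟨fun i => h i i, fun i j _ => h i j⟩,
    fun ⟨hdiag, hne⟩ i j => (eq_or_ne i j).elim (fun h => h ▸ hdiag i) (hne i j)⟩

section MatrixCalculus

variable {E ι κ : Type*} [NormedAddCommGroup E] [NormedSpace ℝ E] [Fintype ι] [Fintype κ]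

theorem Matrix.contDiff_mulVec_comp (A : Matrix κ ι ℝ) {f : E → ι → ℝ} {k : WithTop ℕ∞}
    (hf : ContDiff ℝ k f) : ContDiff ℝ k (fun y => A *ᵥ f y) :=
  (mulVecLin A).toContinuousLinearMap.contDiff.comp hf

theorem Matrix.hasFDerivAt_mulVec_comp (A : Matrix κ ι ℝ) {q : E → ι → ℝ}
    {q' : E →L[ℝ] ι → ℝ} {x : E} (hq : HasFDerivAt q q' x) :
    HasFDerivAt (fun y => A *ᵥ q y) ((mulVecLin A).toContinuousLinearMap.comp q') x :=
  (mulVecLin A).toContinuousLinearMap.hasFDerivAt.comp x hq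

theorem Matrix.mulVec_add_eq_zero_iff {A : Matrix κ ι ℝ} {q : (ι → ℝ) → κ → ℝ}
    (hq : fderiv ℝ q 0 = 0) :
    (∀ u, A *ᵥ u + q u = 0) ↔ A = 0 ∧ ∀ u, q u = 0 := by
  refine ⟨fun h => ?_, fun ⟨hA, hq⟩ u => by simp [hA, hq]⟩
  set L := (mulVecLin A).toContinuousLinearMap
  have hqL : q = fun u => -L u := funext fun u => eq_neg_of_add_eq_zero_right (h u)
  have hL : L = 0 := by
    rw [← neg_eq_zero, ← hq, hqL]
    exact L.hasFDerivAt.neg.fderiv.symm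
  have hA : A = 0 := ext_iff_mulVec.2 fun u => by
    rw [zero_mulVec]
    exact congr($hL u)
  exact ⟨hA, fun u => by simpa [hA] using h u⟩

end MatrixCalculus

section PartialDerivatives

variable {d n m : ℕ} {f g : (Fin d → ℝ) → (Fin n → ℝ)} {x : Fin d → ℝ} (j k : Fin d)

theorem pd_clm_comp (L : (Fin n → ℝ) →L[ℝ] (Fin m → ℝ)) (hf : DifferentiableAt ℝ f x) :
    pd j (fun y => L (f y)) x = L (pd j f x) := by
  simp [pd, fderiv_fun_comp x L.differentiableAt hf]

theorem pd_add (hf : DifferentiableAt ℝ f x) (hg : DifferentiableAt ℝ g x) :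
    pd j (fun y => f y + g y) x = pd j f x + pd j g x := by
  simp [pd, fderiv_fun_add hf hg]

theorem pd_sub (hf : DifferentiableAt ℝ f x) (hg : DifferentiableAt ℝ g x) :
    pd j (fun y => f y - g y) x = pd j f x - pd j g x := by
  simp [pd, fderiv_fun_sub hf hg]

theorem pd_const (c : Fin n → ℝ) : pd j (fun _ : Fin d → ℝ => c) = fun _ => 0 := by
  ext
  simp [pd]

theorem differentiable_pd (hf : ContDiff ℝ 2 f) : Differentiable ℝ (pd k f) :=
  fun y => ((hf.fderiv_right (m := 1) (by norm_num)).differentiable one_ne_zero y).clm_apply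
    (differentiableAt_const _)

theorem pd_pd_eq_fderiv_fderiv (hf : ContDiff ℝ 2 f) :
    pd j (pd k f) x = fderiv ℝ (fderiv ℝ f) x (Pi.single j 1) (Pi.single k 1) := by
  have hdf := (hf.fderiv_right (m := 1) (by norm_num)).differentiable one_ne_zero x
  unfold pd
  simp [fderiv_clm_apply hdf (differentiableAt_const _)]

theorem pd_pd_comm (hf : ContDiff ℝ 2 f) : pd j (pd k f) x = pd k (pd j f) x := by
  rw [pd_pd_eq_fderiv_fderiv j k hf, pd_pd_eq_fderiv_fderiv k j hf]
  exact hf.contDiffAt.isSymmSndFDerivAt (by simp [minSmoothness_of_isRCLikeNormedField]) _ _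

theorem pd_pd_add (hf : ContDiff ℝ 2 f) (hg : ContDiff ℝ 2 g) :
    pd j (pd k (fun y => f y + g y)) x = pd j (pd k f) x + pd j (pd k g) x := by
  have h : pd k (fun y => f y + g y) = fun y => pd k f y + pd k g y :=
    funext fun y => pd_add k (hf.differentiable two_ne_zero y) (hg.differentiable two_ne_zero y)
  rw [h, pd_add j (differentiable_pd k hf x) (differentiable_pd k hg x)]

theorem pd_pd_sub (hf : ContDiff ℝ 2 f) (hg : ContDiff ℝ 2 g) :
    pd j (pd k (fun y => f y - g y)) x = pd j (pd k f) x - pd j (pd k g) x := by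
  have h : pd k (fun y => f y - g y) = fun y => pd k f y - pd k g y :=
    funext fun y => pd_sub k (hf.differentiable two_ne_zero y) (hg.differentiable two_ne_zero y)
  rw [h, pd_sub j (differentiable_pd k hf x) (differentiable_pd k hg x)]

theorem pd_pd_mulVec (A : Matrix (Fin m) (Fin n) ℝ) (hf : ContDiff ℝ 2 f) :
    pd j (pd k (fun y => A *ᵥ f y)) x = A *ᵥ pd j (pd k f) x := by
  set L := (mulVecLin A).toContinuousLinearMap
  have h : pd k (fun y => L (f y)) = fun y => L (pd k f y) :=
    funext fun y => pd_clm_comp k L (hf.differentiable two_ne_zero y)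
  exact (congrArg (pd j · x) h).trans (pd_clm_comp j L (differentiable_pd k hf x))

theorem pd_pd_comp_of_pd_eq_zero {G : (Fin n → ℝ) → (Fin m → ℝ)} {V : (Fin d → ℝ) → (Fin n → ℝ)}
    (hG : ContDiff ℝ 2 G) (hV : ContDiff ℝ 2 V) (hx : pd k V x = 0) :
    pd j (pd k (fun y => G (V y))) x = fderiv ℝ G (V x) (pd j (pd k V) x) := by
  have hG1 : Differentiable ℝ G := hG.differentiable two_ne_zero
  have hV1 : Differentiable ℝ V := hV.differentiable two_ne_zero
  have hchain : pd k (fun y => G (V y)) = fun y => fderiv ℝ G (V y) (pd k V y) := by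
    ext1 y
    simp [pd, fderiv_fun_comp y (hG1 (V y)) (hV1 y)]
  have hDG : HasFDerivAt (fun y => fderiv ℝ G (V y)) _ x :=
    (((hG.fderiv_right (m := 1) (by norm_num)).differentiable one_ne_zero (V x)).hasFDerivAt).comp
      x (hV1 x).hasFDerivAt
  rw [hchain]
  change fderiv ℝ (fun y => fderiv ℝ G (V y) (pd k V y)) x (Pi.single j 1) = _
  -- the term of the product rule that carries `pd k V x = 0` drops out
  rw [(hDG.clm_apply (differentiable_pd k hV x).hasFDerivAt).fderiv]
  simp [hx]
  rfl

end PartialDerivatives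

theorem fderiv_apply_eq_proj {ι : Type*} [Fintype ι] (i : ι) (y : ι → ℝ) :
    fderiv ℝ (fun y : ι → ℝ => y i) y = ContinuousLinearMap.proj i :=
  (hasFDerivAt_apply i y).fderiv

section QuadraticTest

variable {d n m : ℕ} (a b : Fin d) (v w : Fin n → ℝ)

def quadraticTest : (Fin d → ℝ) → (Fin n → ℝ) :=
  fun y => v + (y a * y b) • w

theorem contDiff_quadraticTest : ContDiff ℝ 2 (quadraticTest a b v w) := by
  unfold quadraticTest
  fun_prop

@[simp] theorem quadraticTest_zero : quadraticTest a b v w 0 = v := by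
  simp [quadraticTest]

theorem pd_quadraticTest (k : Fin d) (y : Fin d → ℝ) :
    pd k (quadraticTest a b v w) y
      = ((Pi.single k 1 : Fin d → ℝ) a * y b + y a * (Pi.single k 1 : Fin d → ℝ) b) • w := by
  unfold pd quadraticTest
  simp only [fderiv_const_add]
  rw [fderiv_smul_const (by fun_prop), fderiv_fun_mul (by fun_prop) (by fun_prop)]
  simp [fderiv_apply_eq_proj]
  ring_nf

theorem pd_pd_quadraticTest (j k : Fin d) :
    pd j (pd k (quadraticTest a b v w)) 0
      = ((Pi.single j 1 : Fin d → ℝ) a * (Pi.single k 1 : Fin d → ℝ) b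
          + (Pi.single k 1 : Fin d → ℝ) a * (Pi.single j 1 : Fin d → ℝ) b) • w := by
  rw [show pd k (quadraticTest a b v w) = _ from funext (pd_quadraticTest a b v w k)]
  unfold pd
  rw [fderiv_smul_const (by fun_prop), fderiv_fun_add (by fun_prop) (by fun_prop),
    fderiv_const_mul (by fun_prop), fderiv_mul_const (by fun_prop)]
  simp [fderiv_apply_eq_proj]
  ring_nf

theorem sum_pd_pd_comp_quadraticTest (G : Fin d → Fin d → (Fin n → ℝ) → (Fin m → ℝ))
    (hG : ∀ j k, ContDiff ℝ 2 (G j k)) :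
    ∑ j, ∑ k, pd j (pd k (fun y => G j k (quadraticTest a b v w y))) 0
      = fderiv ℝ (G a b) v w + fderiv ℝ (G b a) v w := by
  have hchain (j k : Fin d) : pd j (pd k (fun y => G j k (quadraticTest a b v w y))) 0
      = fderiv ℝ (G j k) v (pd j (pd k (quadraticTest a b v w)) 0) := by
    simpa using pd_pd_comp_of_pd_eq_zero (x := 0) j k (hG j k) (contDiff_quadraticTest a b v w)
      (by simp [pd_quadraticTest])
  simp only [hchain, pd_pd_quadraticTest, map_smul]
  simp [Pi.single_apply, add_smul, Finset.sum_add_distrib, ite_smul]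

end QuadraticTest

theorem sum_pd_pd_comp_eq_zero_iff {d n m : ℕ} (G : Fin d → Fin d → (Fin n → ℝ) → (Fin m → ℝ))
    (hG : ∀ j k, ContDiff ℝ 2 (G j k)) :
    (∀ V : (Fin d → ℝ) → (Fin n → ℝ), ContDiff ℝ 2 V →
        ∀ x, ∑ j, ∑ k, pd j (pd k (fun y => G j k (V y))) x = 0) ↔
      ∀ j k u, G j k u + G k j u = G j k 0 + G k j 0 := by
  constructor
  · intro h a b u
    have hGab := (hG a b).differentiable two_ne_zero
    have hGba := (hG b a).differentiable two_ne_zero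
    refine is_const_of_fderiv_eq_zero (hGab.add hGba) (fun v => ?_) u 0
    ext1 w
    rw [fderiv_add (hGab v) (hGba v), _root_.add_apply,
      ← sum_pd_pd_comp_quadraticTest a b v w G hG]
    exact h _ (contDiff_quadraticTest a b v w) 0
  · intro hS V hV x
    have hGV (j k : Fin d) : ContDiff ℝ 2 (fun y => G j k (V y)) := (hG j k).comp hV
    refine sum_sum_eq_zero_of_add_swap_eq_zero _ _ fun j k => ?_
    rw [pd_pd_comm k j (hGV k j), ← pd_pd_add j k (hGV j k) (hGV k j)]
    simp [hS j k, pd_const]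

section Involution

variable {d n m : ℕ} {N : Fin d → Matrix (Fin n) (Fin n) ℝ} (Γ : Fin d → Matrix (Fin m) (Fin n) ℝ)
  (M : Fin d → Matrix (Fin m) (Fin m) ℝ) {Q F : Fin d → (Fin n → ℝ) → (Fin n → ℝ)}

def involutionDefect (F : Fin d → (Fin n → ℝ) → (Fin n → ℝ)) (j k : Fin d) (u : Fin n → ℝ) :
    Fin m → ℝ :=
  Γ j *ᵥ F k u - (M j * Γ k) *ᵥ u

theorem contDiff_involutionDefect (hF : ∀ k, ContDiff ℝ 2 (F k)) (j k : Fin d) :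
    ContDiff ℝ 2 (involutionDefect Γ M F j k) :=
  (contDiff_mulVec_comp _ (hF k)).sub (contDiff_mulVec_comp _ contDiff_id)

theorem involution_identity_iff_sum_pd_pd_involutionDefect (hF : ∀ k, ContDiff ℝ 2 (F k)) :
    (∀ V : (Fin d → ℝ) → (Fin n → ℝ), ContDiff ℝ 2 V → ∀ x,
        ∑ j, ∑ k, Γ j *ᵥ pd j (pd k (fun y => F k (V y))) x
          = ∑ j, ∑ k, (M j * Γ k) *ᵥ pd j (pd k V) x) ↔
      ∀ V : (Fin d → ℝ) → (Fin n → ℝ), ContDiff ℝ 2 V → ∀ x,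
        ∑ j, ∑ k, pd j (pd k (fun y => involutionDefect Γ M F j k (V y))) x = 0 := by
  refine forall₂_congr fun V hV => forall_congr' fun x => ?_
  rw [← sub_eq_zero, ← Finset.sum_sub_distrib]
  refine Eq.congr_left (Finset.sum_congr rfl fun j _ => ?_)
  rw [← Finset.sum_sub_distrib]
  refine Finset.sum_congr rfl fun k _ => ?_
  have hFV : ContDiff ℝ 2 (fun y => F k (V y)) := (hF k).comp hV
  simp only [involutionDefect]
  rw [pd_pd_sub j k (contDiff_mulVec_comp _ hFV) (contDiff_mulVec_comp _ hV),
    pd_pd_mulVec j k _ hFV, pd_pd_mulVec j k _ hV]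

theorem involutionDefect_zero (hF : ∀ j v, F j v = N j *ᵥ v + Q j v) (hQ0 : ∀ j, Q j 0 = 0)
    (j k : Fin d) : involutionDefect Γ M F j k 0 = 0 := by
  simp [involutionDefect, hF, hQ0]

theorem involutionDefect_add_swap (hF : ∀ j v, F j v = N j *ᵥ v + Q j v) (j k : Fin d)
    (u : Fin n → ℝ) :
    involutionDefect Γ M F j k u + involutionDefect Γ M F k j u
      = (Γ j * N k + Γ k * N j - (M j * Γ k + M k * Γ j)) *ᵥ u
        + (Γ j *ᵥ Q k u + Γ k *ᵥ Q j u) := by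
  simp only [involutionDefect, hF, mulVec_add, sub_mulVec, add_mulVec, mulVec_mulVec]
  abel

theorem involutionDefect_add_swap_eq_zero_iff (hF : ∀ j v, F j v = N j *ᵥ v + Q j v)
    (hQ : ∀ j, HasFDerivAt (Q j) (0 : (Fin n → ℝ) →L[ℝ] Fin n → ℝ) 0) (j k : Fin d) :
    (∀ u, involutionDefect Γ M F j k u + involutionDefect Γ M F k j u = 0) ↔
      Γ j * N k + Γ k * N j = M j * Γ k + M k * Γ j ∧ ∀ u, Γ j *ᵥ Q k u + Γ k *ᵥ Q j u = 0 := by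
  have hQjk : fderiv ℝ (fun u => Γ j *ᵥ Q k u + Γ k *ᵥ Q j u) 0 = 0 := by
    simpa using ((hasFDerivAt_mulVec_comp (Γ j) (hQ k)).fun_add
      (hasFDerivAt_mulVec_comp (Γ k) (hQ j))).fderiv
  simp only [involutionDefect_add_swap Γ M hF]
  rw [mulVec_add_eq_zero_iff hQjk, sub_eq_zero]

end Involution

/-- Lemma 2.5: characterization of Dafermos' involution condition by algebraic relations.
With fluxes `F_j(v) = N_j v + Q_j(v)` (`Q_j(0) = 0`, `DQ_j(0) = 0`), the involution identity
`Γ 𝓕(V) = 𝓜 Γ V`, i.e.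
`Σ_{j,k} Γ_j ∂_{x_j}∂_{x_k}(F_k ∘ V) = Σ_{j,k} M_j Γ_k ∂_{x_j}∂_{x_k} V` for every `C²` map `V`,
holds if and only if the algebraic relations `Γ_j N_j = M_j Γ_j`, `Γ_j Q_j ≡ 0`,
`Γ_j N_k + Γ_k N_j = M_j Γ_k + M_k Γ_j` and `Γ_j Q_k + Γ_k Q_j ≡ 0` (for `j ≠ k`) hold. -/
theorem involution_iff_algebraic_relations {d n m : ℕ}
    (N : Fin d → Matrix (Fin n) (Fin n) ℝ)
    (Γ : Fin d → Matrix (Fin m) (Fin n) ℝ)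
    (M : Fin d → Matrix (Fin m) (Fin m) ℝ)
    (Q : Fin d → (Fin n → ℝ) → (Fin n → ℝ))
    (hQsmooth : ∀ j, ContDiff ℝ 2 (Q j))
    (hQ0 : ∀ j, Q j 0 = 0)
    (hDQ0 : ∀ j, fderiv ℝ (Q j) 0 = 0)
    (F : Fin d → (Fin n → ℝ) → (Fin n → ℝ))
    (hF : ∀ j v, F j v = (N j).mulVec v + Q j v) :
    (∀ (V : (Fin d → ℝ) → (Fin n → ℝ)), ContDiff ℝ 2 V →
        ∀ x : Fin d → ℝ,
          ∑ j, ∑ k, (Γ j).mulVec (pd j (pd k (fun y => F k (V y))) x)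
            = ∑ j, ∑ k, (M j * Γ k).mulVec (pd j (pd k V) x))
      ↔
      ((∀ j, Γ j * N j = M j * Γ j) ∧
       (∀ j, ∀ v, (Γ j).mulVec (Q j v) = 0) ∧
       (∀ j k, j ≠ k → Γ j * N k + Γ k * N j = M j * Γ k + M k * Γ j) ∧
       (∀ j k, j ≠ k → ∀ v, (Γ j).mulVec (Q k v) + (Γ k).mulVec (Q j v) = 0)) := by
  have hFC2 (k : Fin d) : ContDiff ℝ 2 (F k) := by
    rw [funext (hF k)]
    exact (contDiff_mulVec_comp _ contDiff_id).add (hQsmooth k)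
  have hQ (j : Fin d) : HasFDerivAt (Q j) (0 : (Fin n → ℝ) →L[ℝ] Fin n → ℝ) 0 :=
    hDQ0 j ▸ ((hQsmooth j).differentiable two_ne_zero 0).hasFDerivAt
  rw [involution_identity_iff_sum_pd_pd_involutionDefect Γ M hFC2,
    sum_pd_pd_comp_eq_zero_iff _ (contDiff_involutionDefect Γ M hFC2)]
  simp only [involutionDefect_zero Γ M hF hQ0, add_zero,
    involutionDefect_add_swap_eq_zero_iff Γ M hF hQ]
  rw [forall_forall_iff_forall_and_forall_ne]
  simp only [← two_smul ℝ, smul_right_inj (two_ne_zero' ℝ), smul_eq_zero, two_ne_zero,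
    false_or, forall_and, and_assoc]
end

section
/- Consider the Rankine–Hugoniot conditions for a stationary planar shock in the x₁ direction of the 2-D isentropic MHD β-model with pressure p(ρ) = aρ^γ: for states (ρ⁺,u₁⁺,u₂⁺,h₁⁺,h₂⁺) and (ρ⁻,u₁⁻,u₂⁻,h₁⁻,h₂⁻), (1) ρ⁺u₁⁺ = ρ⁻u₁⁻; (2) ρ⁺(u₁⁺)² + ((h₂⁺)² − (h₁⁺)²)/2 + a(ρ⁺)^γ = ρ⁻(u₁⁻)² + ((h₂⁻)² − (h₁⁻)²)/2 + a(ρ⁻)^γ; (3) ρ⁺u₁⁺u₂⁺ − h₁⁺h₂⁺ = ρ⁻u₁⁻u₂⁻ − h₁⁻h₂⁻; (4) β h₁⁺ = β h₁⁻; (5) h₂⁺u₁⁺ − h₁⁺u₂⁺ = h₂⁻u₁⁻ − h₁⁻u₂⁻. Assume β ≠ 0, a > 0, γ ≥ 1, ρ⁺ > 0, ρ⁻ > 0, u₁⁺ ≠ 0, the parallel conditions u₂⁺ = 0 and h₂⁺ = 0, and the nondegeneracy condition (h₁⁺)² ≠ ρ⁻(u₁⁻)². Then h₁⁺ = h₁⁻,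 u₂⁻ = 0, and h₂⁻ = 0; moreover, setting R := ρ⁺/ρ⁻, one has R = u₁⁻/u₁⁺, and if in addition R ≠ 1, then the downstream Mach number M defined by M² := (u₁⁺)²/(a γ (ρ⁺)^{γ−1}) satisfies M² = (R^γ − 1)/(γ R^γ (R − 1)). -/
/-!
With `u₂⁺ = h₂⁺ = 0` and `h₁⁺ = h₁⁻`, conditions (3) and (5) form a homogeneous linear system in
`(u₂⁻, h₂⁻)` whose determinant is `ρ⁻(u₁⁻)² − (h₁⁺)²`, so the tangential components vanish
downstream. The magnetic terms then cancel in (2), leaving the gas-dynamic balance of mass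
flux `m = ρu₁` and momentum `m²/ρ + aρ^γ`; eliminating `m` expresses `(u₁⁺)²` through the
densities alone, which is the Mach number relation after dividing by `aγ(ρ⁺)^{γ-1}`.
-/

theorem tangential_eq_zero_of_nondegenerate {ρ u v h w : ℝ}
    (hvw : ρ * u * v = h * w) (hwv : w * u = h * v) (hdet : h ^ 2 ≠ ρ * u ^ 2) :
    v = 0 ∧ w = 0 := by
  have hdet' : ρ * u ^ 2 - h ^ 2 ≠ 0 := sub_ne_zero.mpr hdet.symm
  have hv : v * (ρ * u ^ 2 - h ^ 2) = 0 := by linear_combination u * hvw + h * hwv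
  have hw : w * (ρ * u ^ 2 - h ^ 2) = 0 := by linear_combination ρ * u * hwv + h * hvw
  exact ⟨(mul_eq_zero.mp hv).resolve_right hdet', (mul_eq_zero.mp hw).resolve_right hdet'⟩

theorem density_ratio_eq_velocity_ratio {ρp ρm up um : ℝ} (hρm : ρm ≠ 0) (hup : up ≠ 0)
    (hmass : ρp * up = ρm * um) : ρp / ρm = um / up := by
  rw [div_eq_div_iff hρm hup, hmass, mul_comm]

theorem sq_velocity_mul_density_jump {a γ ρp ρm up um : ℝ}
    (hmass : ρp * up = ρm * um) (hmom : ρp * up ^ 2 + a * ρp ^ γ = ρm * um ^ 2 + a * ρm ^ γ) :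
    ρp * up ^ 2 * (ρm - ρp) = a * ρm * (ρm ^ γ - ρp ^ γ) := by
  linear_combination ρm * hmom - (ρp * up + ρm * um) * hmass

theorem mach_sq_eq_of_mass_momentum_balance {a γ ρp ρm up um : ℝ} (ha : a ≠ 0) (hγ : γ ≠ 0)
    (hρp : 0 < ρp) (hρm : 0 < ρm) (hR : ρp / ρm ≠ 1)
    (hmass : ρp * up = ρm * um) (hmom : ρp * up ^ 2 + a * ρp ^ γ = ρm * um ^ 2 + a * ρm ^ γ) :
    up ^ 2 / (a * γ * ρp ^ (γ - 1))
      = ((ρp / ρm) ^ γ - 1) / (γ * (ρp / ρm) ^ γ * (ρp / ρm - 1)) := by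
  have hjump := sq_velocity_mul_density_jump hmass hmom
  have hRm1 : ρp / ρm - 1 ≠ 0 := sub_ne_zero.mpr hR
  rw [Real.div_rpow hρp.le hρm.le, Real.rpow_sub hρp, Real.rpow_one,
    div_eq_div_iff (by positivity) (mul_ne_zero (by positivity) hRm1)]
  field_simp
  linear_combination -hjump

/-- Lemma 3.1(i): parametrization of parallel MHD planar shocks with zero speed.  Under the
Rankine–Hugoniot conditions of the 2-D isentropic MHD β-model with `p(ρ) = aρ^γ`, assuming
`β ≠ 0`, `a > 0`, `γ ≥ 1`, positive densities, `u₁⁺ ≠ 0`, the parallel conditions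
`u₂⁺ = 0`, `h₂⁺ = 0`, and the nondegeneracy `(h₁⁺)² ≠ ρ⁻(u₁⁻)²`, one has `h₁⁺ = h₁⁻`,
`u₂⁻ = 0`, `h₂⁻ = 0`, `R := ρ⁺/ρ⁻ = u₁⁻/u₁⁺`, and (if `R ≠ 1`) the downstream Mach number
satisfies `M² = (R^γ − 1)/(γ R^γ (R − 1))`. -/
theorem parallel_MHD_shock_parametrization
    (a γ β : ℝ)
    (ρp up1 up2 hp1 hp2 : ℝ)  -- state on the + side
    (ρm um1 um2 hm1 hm2 : ℝ)  -- state on the − side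
    (hβ : β ≠ 0) (ha : 0 < a) (hγ : 1 ≤ γ)
    (hρp : 0 < ρp) (hρm : 0 < ρm) (hup1 : up1 ≠ 0)
    (hpar_u : up2 = 0) (hpar_h : hp2 = 0)
    (hnondeg : hp1 ^ 2 ≠ ρm * um1 ^ 2)
    -- Rankine–Hugoniot conditions for a stationary planar shock in the x₁ direction:
    (RH1 : ρp * up1 = ρm * um1)
    (RH2 : ρp * up1 ^ 2 + (hp2 ^ 2 - hp1 ^ 2) / 2 + a * ρp ^ γ
            = ρm * um1 ^ 2 + (hm2 ^ 2 - hm1 ^ 2) / 2 + a * ρm ^ γ)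
    (RH3 : ρp * up1 * up2 - hp1 * hp2 = ρm * um1 * um2 - hm1 * hm2)
    (RH4 : β * hp1 = β * hm1)
    (RH5 : hp2 * up1 - hp1 * up2 = hm2 * um1 - hm1 * um2) :
    hp1 = hm1 ∧ um2 = 0 ∧ hm2 = 0 ∧
    ρp / ρm = um1 / up1 ∧
    (ρp / ρm ≠ 1 →
      up1 ^ 2 / (a * γ * ρp ^ (γ - 1))
        = ((ρp / ρm) ^ γ - 1) / (γ * (ρp / ρm) ^ γ * (ρp / ρm - 1))) := by
  obtain rfl : hp1 = hm1 := mul_left_cancel₀ hβ RH4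
  subst hpar_u hpar_h
  obtain ⟨rfl, rfl⟩ := tangential_eq_zero_of_nondegenerate (v := um2) (w := hm2)
    (by linarith [RH3]) (by linarith [RH5]) hnondeg
  refine ⟨rfl, rfl, rfl, density_ratio_eq_velocity_ratio hρm.ne' hup1 RH1, fun hR => ?_⟩
  exact mach_sq_eq_of_mass_momentum_balance ha.ne' (zero_lt_one.trans_le hγ).ne' hρp hρm hR RH1
    (by linarith [RH2])
end

section
/- Let p_ρ > 0, ρ > 0, h₁ ≠ 0 and β ≠ 0 be real numbers. The 5×5 real matrix 𝒜 = [[0, 0, 1, 0, 0], [0, 0, 0, 0, −h₁], [p_ρ, 0, 0, 0, 0], [0, 0, h₁/ρ, 0, β], [0, 0, 0, 0, 0]] has characteristic polynomial X³(X² − p_ρ), its eigenvalue 0 has algebraic multiplicity 3 but geometric multiplicity 2 (its kernel is the span of e₂ and e₄), and consequently 𝒜 is not diagonalizable over ℂ. -/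
/-!
Cofactor expansion gives the characteristic polynomial `X³(X² − p_ρ)`, so `0` is a triple root.
With coordinates indexed from `0`, the kernel equations read `x₂ = 0`, `h₁ x₄ = 0`,
`p_ρ x₀ = 0`, leaving only `e₁` and `e₃`.
Every eigenvector `x` (for any eigenvalue `μ`, over any field) has `x₄ = 0`: the last row of the
symbol vanishes, so `μ x₄ = 0`, and for `μ = 0` the second row gives `h₁ x₄ = 0`. Hence the
eigenspaces all lie in the hyperplane `x₄ = 0` and cannot span.
-/

open Polynomial

theorem Polynomial.rootMultiplicity_zero_X_pow_mul {R : Type*} [CommRing R] [IsDomain R]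
    {p : R[X]} (hp : p.eval 0 ≠ 0) (n : ℕ) : (X ^ n * p).rootMultiplicity 0 = n := by
  have hp0 : p ≠ 0 := by rintro rfl; simp at hp
  have := rootMultiplicity_mul_X_sub_C_pow (a := 0) (n := n) hp0
  rwa [map_zero, sub_zero, mul_comm, rootMultiplicity_eq_zero hp, zero_add] at this

theorem finrank_span_pair_single {K ι : Type*} [Field K] [DecidableEq ι] {i j : ι}
    (hij : i ≠ j) :
    Module.finrank K (Submodule.span K {(Pi.single i 1 : ι → K), Pi.single j 1}) = 2 := by
  have hli : LinearIndependent K ![(Pi.single i 1 : ι → K), Pi.single j 1] := by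
    convert (Pi.linearIndependent_single_one ι K).comp ![i, j] (injective_pair_iff_ne.mpr hij)
      using 1
    ext k : 1
    fin_cases k <;> rfl
  rw [← Matrix.range_cons_cons_empty, finrank_span_eq_card hli, Fintype.card_fin]

section BetaSymbol

open scoped Matrix

variable {K : Type*} [Field K]

def betaSymbol (pρ ρ h₁ β : K) : Matrix (Fin 5) (Fin 5) K :=
  !![0, 0, 1, 0, 0;
     0, 0, 0, 0, -h₁;
     pρ, 0, 0, 0, 0;
     0, 0, h₁ / ρ, 0, β;
     0, 0, 0, 0, 0]

variable (pρ ρ h₁ β : K)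

theorem charpoly_betaSymbol : (betaSymbol pρ ρ h₁ β).charpoly = X ^ 3 * (X ^ 2 - C pρ) := by
  have hcharmatrix : (betaSymbol pρ ρ h₁ β).charmatrix =
      !![X, 0, -1, 0, 0;
         0, X, 0, 0, C h₁;
         -C pρ, 0, X, 0, 0;
         0, 0, -C (h₁ / ρ), X, -C β;
         0, 0, 0, 0, X] := by
    ext i j
    fin_cases i <;> fin_cases j <;> simp [betaSymbol]
  rw [Matrix.charpoly, hcharmatrix]
  simp [Matrix.det_succ_row_zero, Fin.sum_univ_succ, Fin.succAbove]
  ring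

theorem rootMultiplicity_zero_charpoly_betaSymbol {pρ : K} (hpρ : pρ ≠ 0) :
    (betaSymbol pρ ρ h₁ β).charpoly.rootMultiplicity 0 = 3 := by
  rw [charpoly_betaSymbol]
  exact rootMultiplicity_zero_X_pow_mul (by simpa using hpρ) 3

theorem betaSymbol_mulVec (x : Fin 5 → K) :
    betaSymbol pρ ρ h₁ β *ᵥ x = ![x 2, -h₁ * x 4, pρ * x 0, h₁ / ρ * x 2 + β * x 4, 0] := by
  ext i
  fin_cases i <;> simp [betaSymbol, Matrix.mulVec, dotProduct, Fin.sum_univ_five]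

theorem ker_mulVecLin_betaSymbol {pρ h₁ : K} (hpρ : pρ ≠ 0) (hh₁ : h₁ ≠ 0) :
    LinearMap.ker (betaSymbol pρ ρ h₁ β).mulVecLin =
      Submodule.span K {Pi.single 1 1, Pi.single 3 1} := by
  apply le_antisymm
  · intro x hx
    have hrows := LinearMap.mem_ker.mp hx
    rw [Matrix.mulVecLin_apply, betaSymbol_mulVec] at hrows
    have hx₂ : x 2 = 0 := congrFun hrows 0
    have hx₄ : x 4 = 0 := by simpa [hh₁] using congrFun hrows 1
    have hx₀ : x 0 = 0 := by simpa [hpρ] using congrFun hrows 2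
    refine Submodule.mem_span_pair.mpr ⟨x 1, x 3, ?_⟩
    ext i
    fin_cases i <;> simp [hx₀, hx₂, hx₄]
  · rw [Submodule.span_le, Set.insert_subset_iff, Set.singleton_subset_iff]
    constructor <;>
    · rw [SetLike.mem_coe, LinearMap.mem_ker, Matrix.mulVecLin_apply, betaSymbol_mulVec]
      ext i
      fin_cases i <;> simp

theorem finrank_ker_mulVecLin_betaSymbol {pρ h₁ : K} (hpρ : pρ ≠ 0) (hh₁ : h₁ ≠ 0) :
    Module.finrank K (LinearMap.ker (betaSymbol pρ ρ h₁ β).mulVecLin) = 2 := by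
  rw [ker_mulVecLin_betaSymbol ρ β hpρ hh₁]
  exact finrank_span_pair_single (by decide)

theorem eigenspace_mulVecLin_betaSymbol_le {h₁ : K} (hh₁ : h₁ ≠ 0) (μ : K) :
    Module.End.eigenspace (betaSymbol pρ ρ h₁ β).mulVecLin μ ≤
      LinearMap.ker (LinearMap.proj 4 : (Fin 5 → K) →ₗ[K] K) := by
  intro x hx
  have hrows := Module.End.mem_eigenspace_iff.mp hx
  rw [Matrix.mulVecLin_apply, betaSymbol_mulVec] at hrows
  have hrow₁ : -h₁ * x 4 = μ * x 1 := congrFun hrows 1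
  have hrow₄ : 0 = μ * x 4 := congrFun hrows 4
  rw [LinearMap.mem_ker, LinearMap.proj_apply]
  rcases mul_eq_zero.mp hrow₄.symm with rfl | hx₄
  · simpa [hh₁] using hrow₁
  · exact hx₄

theorem iSup_eigenspace_mulVecLin_betaSymbol_ne_top {h₁ : K} (hh₁ : h₁ ≠ 0) :
    ⨆ μ, Module.End.eigenspace (betaSymbol pρ ρ h₁ β).mulVecLin μ ≠ ⊤ := by
  intro htop
  have hle := iSup_le (eigenspace_mulVecLin_betaSymbol_le pρ ρ β hh₁)
  rw [htop, top_le_iff] at hle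
  have hmem : (Pi.single 4 1 : Fin 5 → K) ∈ LinearMap.ker (LinearMap.proj 4) :=
    hle ▸ Submodule.mem_top
  simp at hmem

theorem betaSymbol_map {L : Type*} [Field L] (f : K →+* L) :
    (betaSymbol pρ ρ h₁ β).map f = betaSymbol (f pρ) (f ρ) (f h₁) (f β) := by
  ext i j
  fin_cases i <;> fin_cases j <;> simp [betaSymbol]

end BetaSymbol

theorem betaModel_transverse_symbol_not_diagonalizable_general
    (pρ ρ h₁ β : ℝ) (hpρ : 0 < pρ) (hh₁ : h₁ ≠ 0) :
    (Matrix.charpoly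
        (!![0, 0, 1, 0, 0;
            0, 0, 0, 0, -h₁;
            pρ, 0, 0, 0, 0;
            0, 0, h₁ / ρ, 0, β;
            0, 0, 0, 0, 0] : Matrix (Fin 5) (Fin 5) ℝ)
      = X ^ 3 * (X ^ 2 - C pρ)) ∧
    (Polynomial.rootMultiplicity (0 : ℝ)
        (Matrix.charpoly
          (!![0, 0, 1, 0, 0;
              0, 0, 0, 0, -h₁;
              pρ, 0, 0, 0, 0;
              0, 0, h₁ / ρ, 0, β;
              0, 0, 0, 0, 0] : Matrix (Fin 5) (Fin 5) ℝ)) = 3) ∧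
    (LinearMap.ker
        (Matrix.mulVecLin
          (!![0, 0, 1, 0, 0;
              0, 0, 0, 0, -h₁;
              pρ, 0, 0, 0, 0;
              0, 0, h₁ / ρ, 0, β;
              0, 0, 0, 0, 0] : Matrix (Fin 5) (Fin 5) ℝ))
      = Submodule.span ℝ {(Pi.single 1 1 : Fin 5 → ℝ), (Pi.single 3 1 : Fin 5 → ℝ)}) ∧
    (Module.finrank ℝ
        (LinearMap.ker
          (Matrix.mulVecLin
            (!![0, 0, 1, 0, 0;
                0, 0, 0, 0, -h₁;
                pρ, 0, 0, 0, 0;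
                0, 0, h₁ / ρ, 0, β;
                0, 0, 0, 0, 0] : Matrix (Fin 5) (Fin 5) ℝ))) = 2) ∧
    ¬ ((⨆ μ : ℂ, Module.End.eigenspace
          (Matrix.mulVecLin
            ((!![0, 0, 1, 0, 0;
                0, 0, 0, 0, -h₁;
                pρ, 0, 0, 0, 0;
                0, 0, h₁ / ρ, 0, β;
                0, 0, 0, 0, 0] : Matrix (Fin 5) (Fin 5) ℝ).map (algebraMap ℝ ℂ))) μ) = ⊤) := by
  have hspan := iSup_eigenspace_mulVecLin_betaSymbol_ne_top (algebraMap ℝ ℂ pρ)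
    (algebraMap ℝ ℂ ρ) (algebraMap ℝ ℂ β) (h₁ := algebraMap ℝ ℂ h₁) (by simpa using hh₁)
  rw [← betaSymbol_map] at hspan
  exact ⟨charpoly_betaSymbol pρ ρ h₁ β,
    rootMultiplicity_zero_charpoly_betaSymbol ρ h₁ β hpρ.ne',
    ker_mulVecLin_betaSymbol ρ β hpρ.ne' hh₁,
    finrank_ker_mulVecLin_betaSymbol ρ β hpρ.ne' hh₁, hspan⟩

/-- Final assertion of Proposition 2.10 ('betahyp'): the transverse Fourier symbol
`𝒜(0,1)` of the linearized inviscid MHD β-model about a parallel state (with `ū = 0`) has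
characteristic polynomial `X³(X² − p_ρ)`, its eigenvalue `0` has algebraic multiplicity `3`
but geometric multiplicity `2` (kernel spanned by `e₂` and `e₄`), and consequently the matrix
is not diagonalizable over `ℂ`. -/
theorem betaModel_transverse_symbol_not_diagonalizable
    (pρ ρ h₁ β : ℝ) (hpρ : 0 < pρ) (hρ : 0 < ρ) (hh₁ : h₁ ≠ 0) (hβ : β ≠ 0) :
    (Matrix.charpoly
        (!![0, 0, 1, 0, 0;
            0, 0, 0, 0, -h₁;
            pρ, 0, 0, 0, 0;
            0, 0, h₁ / ρ, 0, β;
            0, 0, 0, 0, 0] : Matrix (Fin 5) (Fin 5) ℝ)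
      = X ^ 3 * (X ^ 2 - C pρ)) ∧
    (Polynomial.rootMultiplicity (0 : ℝ)
        (Matrix.charpoly
          (!![0, 0, 1, 0, 0;
              0, 0, 0, 0, -h₁;
              pρ, 0, 0, 0, 0;
              0, 0, h₁ / ρ, 0, β;
              0, 0, 0, 0, 0] : Matrix (Fin 5) (Fin 5) ℝ)) = 3) ∧
    (LinearMap.ker
        (Matrix.mulVecLin
          (!![0, 0, 1, 0, 0;
              0, 0, 0, 0, -h₁;
              pρ, 0, 0, 0, 0;
              0, 0, h₁ / ρ, 0, β;
              0, 0, 0, 0, 0] : Matrix (Fin 5) (Fin 5) ℝ))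
      = Submodule.span ℝ {(Pi.single 1 1 : Fin 5 → ℝ), (Pi.single 3 1 : Fin 5 → ℝ)}) ∧
    (Module.finrank ℝ
        (LinearMap.ker
          (Matrix.mulVecLin
            (!![0, 0, 1, 0, 0;
                0, 0, 0, 0, -h₁;
                pρ, 0, 0, 0, 0;
                0, 0, h₁ / ρ, 0, β;
                0, 0, 0, 0, 0] : Matrix (Fin 5) (Fin 5) ℝ))) = 2) ∧
    ¬ ((⨆ μ : ℂ, Module.End.eigenspace
          (Matrix.mulVecLin
            ((!![0, 0, 1, 0, 0;
                0, 0, 0, 0, -h₁;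
                pρ, 0, 0, 0, 0;
                0, 0, h₁ / ρ, 0, β;
                0, 0, 0, 0, 0] : Matrix (Fin 5) (Fin 5) ℝ).map (algebraMap ℝ ℂ))) μ) = ⊤) :=
  betaModel_transverse_symbol_not_diagonalizable_general pρ ρ h₁ β hpρ hh₁
end

section
/- Let A₁, A₂ ∈ ℂ^{n×n}, Γ₁, Γ₂ ∈ ℂ^{m×n}, M₁, M₂ ∈ ℂ^{m×m} satisfy Γ₁A₁ = M₁Γ₁, Γ₂A₂ = M₂Γ₂, and Γ₂A₁ + Γ₁A₂ = M₂Γ₁ + M₁Γ₂. Fix λ ∈ ℂ and ξ ∈ ℝ, and let V : ℝ → ℂⁿ be twice differentiable with λV(x) + A₁V′(x) + iξ A₂V(x) = 0 for all x. Then the function φ(x) := Γ₁V′(x) + iξ Γ₂V(x) satisfies λφ(x) + M₁φ′(x) + iξ M₂φ(x) = 0 for all x. -/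
/-- Lemma 2.13(i), normal-modes setting.  Assume the transformed involution relations
`Γ₁A₁ = M₁Γ₁`, `Γ₂A₂ = M₂Γ₂`, `Γ₂A₁ + Γ₁A₂ = M₂Γ₁ + M₁Γ₂`.  If `V : ℝ → ℂⁿ` is twice
differentiable and satisfies the interior equation `λV + A₁V′ + iξA₂V = 0`, then
`φ := Γ₁V′ + iξΓ₂V` satisfies `λφ + M₁φ′ + iξM₂φ = 0`. -/
theorem transformed_constraint_solves_propagation_eq {n m : ℕ}
    (A₁ A₂ : Matrix (Fin n) (Fin n) ℂ)
    (Γ₁ Γ₂ : Matrix (Fin m) (Fin n) ℂ)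
    (M₁ M₂ : Matrix (Fin m) (Fin m) ℂ)
    (h₁ : Γ₁ * A₁ = M₁ * Γ₁)
    (h₂ : Γ₂ * A₂ = M₂ * Γ₂)
    (h₃ : Γ₂ * A₁ + Γ₁ * A₂ = M₂ * Γ₁ + M₁ * Γ₂)
    (lam : ℂ) (ξ : ℝ)
    (V : ℝ → (Fin n → ℂ))
    (hV₁ : ∀ x : ℝ, DifferentiableAt ℝ V x)
    (hV₂ : ∀ x : ℝ, DifferentiableAt ℝ (deriv V) x)
    (hint : ∀ x : ℝ,
      lam • V x + A₁.mulVec (deriv V x) + (Complex.I * (ξ : ℂ)) • A₂.mulVec (V x) = 0) :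
    ∀ x : ℝ,
      lam • (fun y : ℝ =>
          Γ₁.mulVec (deriv V y) + (Complex.I * (ξ : ℂ)) • Γ₂.mulVec (V y)) x
        + M₁.mulVec (deriv (fun y : ℝ =>
            Γ₁.mulVec (deriv V y) + (Complex.I * (ξ : ℂ)) • Γ₂.mulVec (V y)) x)
        + (Complex.I * (ξ : ℂ)) • M₂.mulVec ((fun y : ℝ =>
            Γ₁.mulVec (deriv V y) + (Complex.I * (ξ : ℂ)) • Γ₂.mulVec (V y)) x)
        = 0 := by
  intro x
  set c : ℂ := Complex.I * (ξ : ℂ) with hc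
  -- continuous linear maps given by matrices
  let L : ∀ {p : ℕ}, Matrix (Fin p) (Fin n) ℂ → ((Fin n → ℂ) →L[ℝ] (Fin p → ℂ)) :=
    fun Γ => LinearMap.toContinuousLinearMap ((Γ.mulVecLin.restrictScalars ℝ))
  have hLapp : ∀ {p : ℕ} (Γ : Matrix (Fin p) (Fin n) ℂ) (w : Fin n → ℂ),
      L Γ w = Γ.mulVec w := fun Γ w => rfl
  have hdV : HasDerivAt V (deriv V x) x := (hV₁ x).hasDerivAt
  have hdV' : HasDerivAt (deriv V) (deriv (deriv V) x) x := (hV₂ x).hasDerivAt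
  set v := V x
  set v' := deriv V x
  set v'' := deriv (deriv V) x
  -- derivative of matrix ∘ function
  have hcomp : ∀ {p : ℕ} (Γ : Matrix (Fin p) (Fin n) ℂ) (f : ℝ → Fin n → ℂ) (f' : Fin n → ℂ),
      HasDerivAt f f' x → HasDerivAt (fun y => Γ.mulVec (f y)) (Γ.mulVec f') x := by
    intro p Γ f f' hf
    exact (L Γ).hasFDerivAt.comp_hasDerivAt x hf
  -- derivative of the interior-equation expression
  have hg : HasDerivAt
      (fun y => lam • V y + A₁.mulVec (deriv V y) + c • A₂.mulVec (V y))
      (lam • v' + A₁.mulVec v'' + c • A₂.mulVec v') x :=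
    ((hdV.const_smul lam).add (hcomp A₁ (deriv V) v'' hdV')).add
      ((hcomp A₂ V v' hdV).const_smul c)
  have hg0 : HasDerivAt
      (fun y => lam • V y + A₁.mulVec (deriv V y) + c • A₂.mulVec (V y)) 0 x := by
    have : (fun y => lam • V y + A₁.mulVec (deriv V y) + c • A₂.mulVec (V y))
        = fun _ => (0 : Fin n → ℂ) := funext hint
    rw [this]; exact hasDerivAt_const x 0
  have hE' : lam • v' + A₁.mulVec v'' + c • A₂.mulVec v' = 0 :=
    hg.unique hg0
  have hE : lam • v + A₁.mulVec v' + c • A₂.mulVec v = 0 := hint x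
  -- derivative of φ
  have hφ : deriv (fun y : ℝ =>
      Γ₁.mulVec (deriv V y) + c • Γ₂.mulVec (V y)) x
      = Γ₁.mulVec v'' + c • Γ₂.mulVec v' :=
    ((hcomp Γ₁ (deriv V) v'' hdV').add ((hcomp Γ₂ V v' hdV).const_smul c)).deriv
  simp only [hφ]
  -- matrix relations applied to vectors
  have e1 : M₁.mulVec (Γ₁.mulVec v'') = Γ₁.mulVec (A₁.mulVec v'') := by
    rw [Matrix.mulVec_mulVec, Matrix.mulVec_mulVec, h₁]
  have e2 : M₂.mulVec (Γ₂.mulVec v) = Γ₂.mulVec (A₂.mulVec v) := by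
    rw [Matrix.mulVec_mulVec, Matrix.mulVec_mulVec, h₂]
  have e3 : M₂.mulVec (Γ₁.mulVec v') + M₁.mulVec (Γ₂.mulVec v')
      = Γ₂.mulVec (A₁.mulVec v') + Γ₁.mulVec (A₂.mulVec v') := by
    rw [Matrix.mulVec_mulVec, Matrix.mulVec_mulVec, Matrix.mulVec_mulVec,
      Matrix.mulVec_mulVec, ← Matrix.add_mulVec, ← Matrix.add_mulVec, h₃]
  calc lam • (Γ₁.mulVec v' + c • Γ₂.mulVec v)
        + M₁.mulVec (Γ₁.mulVec v'' + c • Γ₂.mulVec v')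
        + c • M₂.mulVec (Γ₁.mulVec v' + c • Γ₂.mulVec v)
      = lam • Γ₁.mulVec v' + (c * lam) • Γ₂.mulVec v
        + M₁.mulVec (Γ₁.mulVec v'')
        + c • (M₂.mulVec (Γ₁.mulVec v') + M₁.mulVec (Γ₂.mulVec v'))
        + (c * c) • M₂.mulVec (Γ₂.mulVec v) := by
        simp only [Matrix.mulVec_add, Matrix.mulVec_smul]
        module
    _ = lam • Γ₁.mulVec v' + (c * lam) • Γ₂.mulVec v
        + Γ₁.mulVec (A₁.mulVec v'')
        + c • (Γ₂.mulVec (A₁.mulVec v') + Γ₁.mulVec (A₂.mulVec v'))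
        + (c * c) • Γ₂.mulVec (A₂.mulVec v) := by rw [e1, e2, e3]
    _ = Γ₁.mulVec (lam • v' + A₁.mulVec v'' + c • A₂.mulVec v')
        + c • Γ₂.mulVec (lam • v + A₁.mulVec v' + c • A₂.mulVec v) := by
        simp only [Matrix.mulVec_add, Matrix.mulVec_smul]
        module
    _ = 0 := by rw [hE', hE]; simp
end

section
/- Let A₁, …, A_d ∈ ℂ^{n×n} be matrices such that for every k ∈ ℝ^d all eigenvalues of k₁A₁ + ⋯ + k_dA_d are real (weak hyperbolicity), and suppose A₁ is invertible. Then for every λ ∈ ℂ with Re(λ) > 0 and every ξ = (ξ₂,…,ξ_d) ∈ ℝ^{d−1}, the matrix −A₁⁻¹(λ·I + i ξ₂A₂ + ⋯ + i ξ_dA_d) has no purely imaginary eigenvalue (no eigenvalue with zero real part). -/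
/-!
If `-A₁⁻¹ C v = i b v` with `b` real and `C = λ + i ∑ ξⱼ Aⱼ`, multiplying by `A₁` gives
`(λ + i (b A₁ + ∑ ξⱼ Aⱼ)) v = 0`, so `i λ` is an eigenvalue of the real combination
`b A₁ + ∑ ξⱼ Aⱼ`. Weak hyperbolicity then forces `Im (i λ) = Re λ` to vanish.
-/

open Module.End

namespace Matrix

variable {ι R K : Type*} [Fintype ι] [CommRing R] [Field K]

theorem hasEigenvalue_mulVecLin_iff {M : Matrix ι ι R} {μ : R} :
    HasEigenvalue M.mulVecLin μ ↔ ∃ v ≠ 0, M *ᵥ v = μ • v := by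
  constructor
  · intro hμ
    obtain ⟨v, hv⟩ := hμ.exists_hasEigenvector
    exact ⟨v, hv.2, hv.apply_eq_smul⟩
  · rintro ⟨v, hv0, hv⟩
    exact hasEigenvalue_of_hasEigenvector ⟨mem_eigenspace_iff.2 hv, hv0⟩

variable [DecidableEq ι]

theorem neg_inv_mul_mulVec_eq_smul_iff {A C : Matrix ι ι R} (hA : IsUnit A) {μ : R}
    {v : ι → R} : -(A⁻¹ * C) *ᵥ v = μ • v ↔ (C + μ • A) *ᵥ v = 0 := by
  rw [← (mulVec_injective_of_isUnit hA).eq_iff, neg_mulVec, mulVec_neg, mulVec_mulVec,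
    mul_nonsing_inv_cancel_left A C ((isUnit_iff_isUnit_det A).mp hA), mulVec_smul,
    add_mulVec, smul_mulVec, neg_eq_iff_add_eq_zero]

theorem hasEigenvalue_neg_inv_mul_iff {A C : Matrix ι ι R} (hA : IsUnit A) {μ : R} :
    HasEigenvalue (-(A⁻¹ * C)).mulVecLin μ ↔ ∃ v ≠ 0, (C + μ • A) *ᵥ v = 0 := by
  simp only [hasEigenvalue_mulVecLin_iff, neg_inv_mul_mulVec_eq_smul_iff hA]

theorem mulVec_eq_smul_of_smul_one_add_smul_mulVec_eq_zero {B : Matrix ι ι K} {a c : K}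
    {v : ι → K} (ha : a ≠ 0) (h : (c • 1 + a • B) *ᵥ v = 0) : B *ᵥ v = -(c / a) • v := by
  rw [add_mulVec, smul_mulVec, smul_mulVec, one_mulVec, add_eq_zero_iff_neg_eq] at h
  rw [← smul_right_inj ha, ← h, smul_smul, mul_neg, mul_div_cancel₀ c ha, neg_smul]

end Matrix

/-- Hersh-type lemma (used in Corollary 2.16): if `k₁A₁ + k₂A₂ + ⋯ + k_dA_d` has only real
eigenvalues for all real `k` (weak hyperbolicity) and `A₁` is invertible, then for every
`λ` with `Re λ > 0` and every real transverse frequency `ξ`, the matrix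
`−A₁⁻¹(λI + iξ₂A₂ + ⋯ + iξ_dA_d)` has no purely imaginary eigenvalue. -/
theorem hersh_no_center_subspace {n d : ℕ}
    (A₁ : Matrix (Fin n) (Fin n) ℂ)
    (A : Fin d → Matrix (Fin n) (Fin n) ℂ)  -- the matrices A₂, …, A_d
    (hweak : ∀ (k₁ : ℝ) (k : Fin d → ℝ) (μ : ℂ),
      Module.End.HasEigenvalue
        (Matrix.mulVecLin ((k₁ : ℂ) • A₁ + ∑ j, (k j : ℂ) • A j)) μ → μ.im = 0)
    (hA₁ : IsUnit A₁)
    (lam : ℂ) (hlam : 0 < lam.re) (ξ : Fin d → ℝ) :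
    ∀ μ : ℂ,
      Module.End.HasEigenvalue
        (Matrix.mulVecLin
          (-(A₁⁻¹ * (lam • (1 : Matrix (Fin n) (Fin n) ℂ)
              + ∑ j, (Complex.I * (ξ j : ℂ)) • A j)))) μ →
      μ.re ≠ 0 := by
  intro μ hμ hre
  obtain ⟨b, rfl⟩ : ∃ b : ℝ, μ = Complex.I * b :=
    ⟨μ.im, Complex.ext (by simp [hre]) (by simp)⟩
  obtain ⟨v, hv0, hv⟩ := (Matrix.hasEigenvalue_neg_inv_mul_iff hA₁).1 hμ
  have hpencil : lam • 1 + ∑ j, (Complex.I * (ξ j : ℂ)) • A j + (Complex.I * b) • A₁ =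
      lam • 1 + Complex.I • ((b : ℂ) • A₁ + ∑ j, (ξ j : ℂ) • A j) := by
    simp only [smul_add, Finset.smul_sum, smul_smul]
    abel
  rw [hpencil] at hv
  have hev := Matrix.hasEigenvalue_mulVecLin_iff.2
    ⟨v, hv0, Matrix.mulVec_eq_smul_of_smul_one_add_smul_mulVec_eq_zero Complex.I_ne_zero hv⟩
  have him : (-(lam / Complex.I)).im = lam.re := by simp
  linarith [hweak b ξ _ hev]
end

section
/- Let A_j ∈ ℂ^{n×n}, Γ_j ∈ ℂ^{m×n}, M_j ∈ ℂ^{m×m} for j = 1,…,d, with A₁ and M₁ invertible, satisfying Γ_j A_j = M_j Γ_j for every j and Γ_j A_l + Γ_l A_j = M_j Γ_l + M_l Γ_j for every pair j, l. Fix λ ∈ ℂ and ξ = (ξ₂,…,ξ_d) ∈ ℝ^{d−1} and define G := −A₁⁻¹(λ·I + Σ_{j=2}^d i ξ_j A_j), H := −M₁⁻¹(λ·I + Σ_{j=2}^d i ξ_j M_j), and L := Γ₁ G + Σ_{j=2}^d i ξ_j Γ_j. Then L G = H L. In particular, the kernel of L is a G-invariant subspace of ℂⁿ. -/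
lemma keyG_smulsum_mul {d k l p : ℕ} (c e : Fin d → ℂ)
    (P : Fin d → Matrix (Fin k) (Fin l) ℂ) (Q : Fin d → Matrix (Fin l) (Fin p) ℂ) :
    (∑ j, c j • P j) * (∑ i, e i • Q i) = ∑ j, ∑ i, (c j * e i) • (P j * Q i) := by
  rw [Matrix.sum_mul]
  refine Finset.sum_congr rfl fun j _ => ?_
  rw [Matrix.smul_mul, Matrix.mul_sum, Finset.smul_sum]
  refine Finset.sum_congr rfl fun i _ => ?_
  rw [Matrix.mul_smul, smul_smul]

/-- Lemma 2.21 ('keyG'): the Laplace–Fourier analogue of the involution relation.  With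
`G = −A₁⁻¹(λI + Σ_j iξ_jA_j)`, `H = −M₁⁻¹(λI + Σ_j iξ_jM_j)` and
`L = Γ₁G + Σ_j iξ_jΓ_j`, the intertwining relations imply `LG = HL`; in particular
`ker L` is a `G`-invariant subspace of `ℂⁿ`. -/
theorem keyG_intertwining {n m d : ℕ}
    (A₁ : Matrix (Fin n) (Fin n) ℂ) (A : Fin d → Matrix (Fin n) (Fin n) ℂ)
    (Γ₁ : Matrix (Fin m) (Fin n) ℂ) (Γ : Fin d → Matrix (Fin m) (Fin n) ℂ)
    (M₁ : Matrix (Fin m) (Fin m) ℂ) (M : Fin d → Matrix (Fin m) (Fin m) ℂ)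
    (hA₁ : IsUnit A₁) (hM₁ : IsUnit M₁)
    (h₁ : Γ₁ * A₁ = M₁ * Γ₁)
    (h₂ : ∀ j, Γ j * A j = M j * Γ j)
    (h₃ : ∀ j l, Γ j * A l + Γ l * A j = M j * Γ l + M l * Γ j)
    (h₄ : ∀ j, Γ₁ * A j + Γ j * A₁ = M₁ * Γ j + M j * Γ₁)
    (lam : ℂ) (ξ : Fin d → ℝ)
    (G : Matrix (Fin n) (Fin n) ℂ) (H : Matrix (Fin m) (Fin m) ℂ)
    (L : Matrix (Fin m) (Fin n) ℂ)
    (hG : G = -(A₁⁻¹ * (lam • (1 : Matrix (Fin n) (Fin n) ℂ)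
        + ∑ j, (Complex.I * (ξ j : ℂ)) • A j)))
    (hH : H = -(M₁⁻¹ * (lam • (1 : Matrix (Fin m) (Fin m) ℂ)
        + ∑ j, (Complex.I * (ξ j : ℂ)) • M j)))
    (hL : L = Γ₁ * G + ∑ j, (Complex.I * (ξ j : ℂ)) • Γ j) :
    L * G = H * L ∧
    ∀ x ∈ LinearMap.ker (Matrix.mulVecLin L),
      G.mulVec x ∈ LinearMap.ker (Matrix.mulVecLin L) := by
  set S := lam • (1 : Matrix (Fin n) (Fin n) ℂ)
      + ∑ j, (Complex.I * (ξ j : ℂ)) • A j with hS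
  set T := lam • (1 : Matrix (Fin m) (Fin m) ℂ)
      + ∑ j, (Complex.I * (ξ j : ℂ)) • M j with hT
  set K := ∑ j, (Complex.I * (ξ j : ℂ)) • Γ j with hK
  have hdA : IsUnit A₁.det := (Matrix.isUnit_iff_isUnit_det A₁).mp hA₁
  have hdM : IsUnit M₁.det := (Matrix.isUnit_iff_isUnit_det M₁).mp hM₁
  have hAB : A₁ * A₁⁻¹ = 1 := Matrix.mul_nonsing_inv A₁ hdA
  have hNM : M₁⁻¹ * M₁ = 1 := Matrix.nonsing_inv_mul M₁ hdM
  have hΓB : Γ₁ * A₁⁻¹ = M₁⁻¹ * Γ₁ := by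
    calc Γ₁ * A₁⁻¹ = M₁⁻¹ * (M₁ * Γ₁) * A₁⁻¹ := by
          rw [← Matrix.mul_assoc, hNM, Matrix.one_mul]
      _ = M₁⁻¹ * (Γ₁ * A₁) * A₁⁻¹ := by rw [h₁]
      _ = M₁⁻¹ * Γ₁ * (A₁ * A₁⁻¹) := by simp only [Matrix.mul_assoc]
      _ = M₁⁻¹ * Γ₁ := by rw [hAB, Matrix.mul_one]
  -- expansions
  have eΓS : Γ₁ * S = lam • Γ₁ + ∑ j, (Complex.I * (ξ j : ℂ)) • (Γ₁ * A j) := by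
    rw [hS, Matrix.mul_add, Matrix.mul_smul, Matrix.mul_one, Matrix.mul_sum]
    exact congrArg _ (Finset.sum_congr rfl fun j _ => Matrix.mul_smul _ _ _)
  have eKA : K * A₁ = ∑ j, (Complex.I * (ξ j : ℂ)) • (Γ j * A₁) := by
    rw [hK, Matrix.sum_mul]
    exact Finset.sum_congr rfl fun j _ => Matrix.smul_mul _ _ _
  have eMK : M₁ * K = ∑ j, (Complex.I * (ξ j : ℂ)) • (M₁ * Γ j) := by
    rw [hK, Matrix.mul_sum]
    exact Finset.sum_congr rfl fun j _ => Matrix.mul_smul _ _ _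
  have eTΓ : T * Γ₁ = lam • Γ₁ + ∑ j, (Complex.I * (ξ j : ℂ)) • (M j * Γ₁) := by
    rw [hT, Matrix.add_mul, Matrix.smul_mul, Matrix.one_mul, Matrix.sum_mul]
    exact congrArg _ (Finset.sum_congr rfl fun j _ => Matrix.smul_mul _ _ _)
  have key : Γ₁ * S + K * A₁ = M₁ * K + T * Γ₁ := by
    have e : ∑ j, (Complex.I * (ξ j : ℂ)) • (Γ₁ * A j)
          + ∑ j, (Complex.I * (ξ j : ℂ)) • (Γ j * A₁)
        = ∑ j, (Complex.I * (ξ j : ℂ)) • (M₁ * Γ j)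
          + ∑ j, (Complex.I * (ξ j : ℂ)) • (M j * Γ₁) := by
      rw [← Finset.sum_add_distrib, ← Finset.sum_add_distrib]
      exact Finset.sum_congr rfl fun j _ => by
        rw [← smul_add, ← smul_add, h₄ j]
    rw [eΓS, eKA, eMK, eTΓ]
    calc lam • Γ₁ + ∑ j, (Complex.I * (ξ j : ℂ)) • (Γ₁ * A j)
          + ∑ j, (Complex.I * (ξ j : ℂ)) • (Γ j * A₁)
        = lam • Γ₁ + (∑ j, (Complex.I * (ξ j : ℂ)) • (Γ₁ * A j)
          + ∑ j, (Complex.I * (ξ j : ℂ)) • (Γ j * A₁)) := by abel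
      _ = lam • Γ₁ + (∑ j, (Complex.I * (ξ j : ℂ)) • (M₁ * Γ j)
          + ∑ j, (Complex.I * (ξ j : ℂ)) • (M j * Γ₁)) := by rw [e]
      _ = ∑ j, (Complex.I * (ξ j : ℂ)) • (M₁ * Γ j)
          + (lam • Γ₁ + ∑ j, (Complex.I * (ξ j : ℂ)) • (M j * Γ₁)) := by abel
  have key2 : K * S = T * K := by
    have hd : ∑ j, ∑ l, ((Complex.I * (ξ j : ℂ)) * (Complex.I * (ξ l : ℂ))) • (Γ j * A l)
        = ∑ j, ∑ l, ((Complex.I * (ξ j : ℂ)) * (Complex.I * (ξ l : ℂ))) • (M j * Γ l) := by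
      have h2 : (2 : ℂ) • (∑ j, ∑ l, ((Complex.I * (ξ j : ℂ)) * (Complex.I * (ξ l : ℂ))) • (Γ j * A l))
          = (2 : ℂ) • (∑ j, ∑ l, ((Complex.I * (ξ j : ℂ)) * (Complex.I * (ξ l : ℂ))) • (M j * Γ l)) := by
        have swapΓ : ∑ j, ∑ l, ((Complex.I * (ξ j : ℂ)) * (Complex.I * (ξ l : ℂ))) • (Γ j * A l)
            = ∑ j, ∑ l, ((Complex.I * (ξ j : ℂ)) * (Complex.I * (ξ l : ℂ))) • (Γ l * A j) := by
          rw [Finset.sum_comm]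
          exact Finset.sum_congr rfl fun j _ => Finset.sum_congr rfl fun l _ => by
            rw [mul_comm (Complex.I * (ξ j : ℂ))]
        have swapM : ∑ j, ∑ l, ((Complex.I * (ξ j : ℂ)) * (Complex.I * (ξ l : ℂ))) • (M j * Γ l)
            = ∑ j, ∑ l, ((Complex.I * (ξ j : ℂ)) * (Complex.I * (ξ l : ℂ))) • (M l * Γ j) := by
          rw [Finset.sum_comm]
          exact Finset.sum_congr rfl fun j _ => Finset.sum_congr rfl fun l _ => by
            rw [mul_comm (Complex.I * (ξ j : ℂ))]
        rw [two_smul, two_smul]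
        nth_rewrite 2 [swapΓ]
        nth_rewrite 2 [swapM]
        rw [← Finset.sum_add_distrib, ← Finset.sum_add_distrib]
        refine Finset.sum_congr rfl fun j _ => ?_
        rw [← Finset.sum_add_distrib, ← Finset.sum_add_distrib]
        refine Finset.sum_congr rfl fun l _ => ?_
        rw [← smul_add, ← smul_add, h₃ j l]
      exact smul_right_injective _ two_ne_zero h2
    have kexp : K * S = lam • K
        + ∑ j, ∑ l, ((Complex.I * (ξ j : ℂ)) * (Complex.I * (ξ l : ℂ))) • (Γ j * A l) := by
      rw [hS, Matrix.mul_add, Matrix.mul_smul, Matrix.mul_one]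
      congr 1
      rw [hK, keyG_smulsum_mul]
    have texp : T * K = lam • K
        + ∑ j, ∑ l, ((Complex.I * (ξ j : ℂ)) * (Complex.I * (ξ l : ℂ))) • (M j * Γ l) := by
      rw [hT, Matrix.add_mul, Matrix.smul_mul, Matrix.one_mul]
      congr 1
      rw [hK, keyG_smulsum_mul]
    rw [kexp, texp, hd]
  -- abbreviation X := A₁⁻¹ * S
  set X := A₁⁻¹ * S with hX
  have hAX : A₁ * X = S := by rw [hX, ← Matrix.mul_assoc, hAB, Matrix.one_mul]
  have hΓX : Γ₁ * X = K + M₁⁻¹ * T * Γ₁ - M₁⁻¹ * (K * A₁) := by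
    have e0 : Γ₁ * X = M₁⁻¹ * (Γ₁ * S) := by
      rw [hX, ← Matrix.mul_assoc, hΓB, Matrix.mul_assoc]
    rw [e0, eq_sub_iff_add_eq, ← Matrix.mul_add, key, Matrix.mul_add,
      ← Matrix.mul_assoc, hNM, Matrix.one_mul, Matrix.mul_assoc]
  have hKAX : M₁⁻¹ * (K * A₁) * X = M₁⁻¹ * (T * K) := by
    rw [Matrix.mul_assoc, Matrix.mul_assoc, hAX, key2]
  have main : L * G = H * L := by
    have e1 : L * G = Γ₁ * X * X - K * X := by
      rw [hL, hG]
      simp only [Matrix.mul_neg, Matrix.neg_mul, neg_neg, Matrix.add_mul, Matrix.mul_assoc]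
      abel
    have e2 : H * L = M₁⁻¹ * T * (Γ₁ * X) - M₁⁻¹ * T * K := by
      rw [hL, hG, hH]
      simp only [Matrix.mul_neg, Matrix.neg_mul, neg_neg, Matrix.mul_add, Matrix.mul_assoc]
      abel
    rw [e1, e2]
    nth_rewrite 1 [hΓX]
    rw [Matrix.sub_mul, Matrix.add_mul, hKAX, Matrix.mul_assoc (M₁⁻¹ * T) Γ₁ X,
      ← Matrix.mul_assoc M₁⁻¹ T K]
    abel
  refine ⟨main, fun x hx => ?_⟩
  simp only [LinearMap.mem_ker, Matrix.mulVecLin_apply] at hx ⊢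
  rw [Matrix.mulVec_mulVec, main, ← Matrix.mulVec_mulVec, hx, Matrix.mulVec_zero]
end

section
/- Let R > 1, 0 < M < 1, ρ⁻ > 0, and u₁⁺ > 0 be real numbers, and consider the equation in the unknown λ₂ ∈ ℝ: i (R − 1)² M³ R³ λ₂ ρ⁻ (u₁⁺)⁷ / (M² − 1) − 2 i (R − 1) M² R λ₂² (u₁⁺)⁴ / (M − 1) = 0 (the vanishing of the sixth-order coefficient Δ₆ of the Lopatinsky determinant). Its solutions are exactly λ₂ = 0 and λ₂ = (R − 1) M R² ρ⁻ (u₁⁺)³ / (2(M + 1)); the nonzero solution is strictly positive. -/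
/-- Equation (3.9): vanishing of the sixth-order coefficient `Δ₆` of the Lopatinsky
determinant.  For `R > 1`, `0 < M < 1`, `ρ⁻ > 0`, `u₁⁺ > 0`, the equation
`i(R−1)²M³R³λ₂ρ⁻(u₁⁺)⁷/(M²−1) − 2i(R−1)M²Rλ₂²(u₁⁺)⁴/(M−1) = 0` in `λ₂ ∈ ℝ` has exactly the
solutions `λ₂ = 0` and `λ₂ = (R−1)MR²ρ⁻(u₁⁺)³/(2(M+1))`, and the nonzero solution is
strictly positive. -/
theorem lopatinsky_sixth_order_coefficient_roots
    (R M ρm u : ℝ) (hR : 1 < R) (hM0 : 0 < M) (hM1 : M < 1) (hρm : 0 < ρm) (hu : 0 < u) :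
    (∀ lam2 : ℝ,
      (Complex.I * (((R - 1) ^ 2 * M ^ 3 * R ^ 3 * lam2 * ρm * u ^ 7 : ℝ) : ℂ)
          / (((M ^ 2 - 1 : ℝ)) : ℂ)
        - 2 * Complex.I * (((R - 1) * M ^ 2 * R * lam2 ^ 2 * u ^ 4 : ℝ) : ℂ)
          / (((M - 1 : ℝ)) : ℂ) = 0)
      ↔ (lam2 = 0 ∨ lam2 = (R - 1) * M * R ^ 2 * ρm * u ^ 3 / (2 * (M + 1)))) ∧
    0 < (R - 1) * M * R ^ 2 * ρm * u ^ 3 / (2 * (M + 1)) := by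
  have hRm : (0:ℝ) < R - 1 := by linarith
  have hR0 : (0:ℝ) < R := by linarith
  have hMm : M - 1 ≠ 0 := by intro h; linarith
  have hMp : (0:ℝ) < M + 1 := by linarith
  have hM2 : M ^ 2 - 1 ≠ 0 := by
    have : M ^ 2 - 1 = (M - 1) * (M + 1) := by ring
    rw [this]
    exact mul_ne_zero hMm (ne_of_gt hMp)
  constructor
  · intro lam2
    have key : (Complex.I * (((R - 1) ^ 2 * M ^ 3 * R ^ 3 * lam2 * ρm * u ^ 7 : ℝ) : ℂ)
          / (((M ^ 2 - 1 : ℝ)) : ℂ)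
        - 2 * Complex.I * (((R - 1) * M ^ 2 * R * lam2 ^ 2 * u ^ 4 : ℝ) : ℂ)
          / (((M - 1 : ℝ)) : ℂ) = 0)
        ↔ ((R - 1) ^ 2 * M ^ 3 * R ^ 3 * lam2 * ρm * u ^ 7 / (M ^ 2 - 1)
            - 2 * ((R - 1) * M ^ 2 * R * lam2 ^ 2 * u ^ 4) / (M - 1) = 0) := by
      constructor
      · intro h
        have h2 : Complex.I * ((((R - 1) ^ 2 * M ^ 3 * R ^ 3 * lam2 * ρm * u ^ 7 / (M ^ 2 - 1)
            - 2 * ((R - 1) * M ^ 2 * R * lam2 ^ 2 * u ^ 4) / (M - 1) : ℝ)) : ℂ) = 0 := by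
          rw [← h]; push_cast; ring
        rcases mul_eq_zero.mp h2 with h3 | h3
        · exact absurd h3 Complex.I_ne_zero
        · exact_mod_cast h3
      · intro h
        have h2 : Complex.I * ((((R - 1) ^ 2 * M ^ 3 * R ^ 3 * lam2 * ρm * u ^ 7 / (M ^ 2 - 1)
            - 2 * ((R - 1) * M ^ 2 * R * lam2 ^ 2 * u ^ 4) / (M - 1) : ℝ)) : ℂ) = 0 := by
          rw [h]; simp
        rw [← h2]; push_cast; ring
    rw [key]
    constructor
    · intro h
      have h2 : M ^ 2 - 1 = (M - 1) * (M + 1) := by ring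
      have h3 : lam2 * ((R - 1) * M ^ 2 * R * u ^ 4 *
          ((R - 1) * M * R ^ 2 * ρm * u ^ 3 - 2 * (M + 1) * lam2)) = 0 := by
        field_simp [h2] at h
        nlinarith [h]
      rcases mul_eq_zero.mp h3 with h4 | h4
      · exact Or.inl h4
      · rcases mul_eq_zero.mp h4 with h5 | h5
        · exfalso
          have : (0:ℝ) < (R - 1) * M ^ 2 * R * u ^ 4 := by positivity
          linarith
        · right
          field_simp
          linarith
    · intro h
      rcases h with h | h <;> subst h <;> field_simp <;> ring
  · positivity
end
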